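/- arXiv:1607.07313 — 12 statements merged into one kernel-verified Lean document; each statement's English description precedes it below -/
import Mathlib

section
/- A (p,q)-graph G is super edge-magic if and only if there exists a bijection g : V(G) → {1,…,p} such that the set S = {g(u)+g(v) : uv ∈ E(G)} consists of q consecutive integers. Moreover, in this case g can be extended to a super edge-magic labeling of G whose valence equals p + q + min S. -/
open Finset

/-- Sum of the labels of the two endpoints of an (undirected) edge. -/
def edgeSum {V : Type*} (g : V → ℤ) : Sym2 V → ℤ :=
  Sym2.lift ⟨fun u v => g u + g v, fun _ _ => add_comm _ _⟩

/-- `f` (given by `fv` on vertices and `fe` on edges) is an edge-magic labeling of the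
`(p,q)`-graph with vertex type `V` and edge set `E`, with valence `k`:
it is a bijection from `V(G) ∪ E(G)` onto `[1, p+q]` and all edge sums equal `k`. -/
def IsEdgeMagicLabeling {V : Type*} [Fintype V] [DecidableEq V] (E : Finset (Sym2 V))
    (fv : V → ℤ) (fe : Sym2 V → ℤ) (k : ℤ) : Prop :=
  Finset.univ.image fv ∪ E.image fe =
    Finset.Icc 1 ((Fintype.card V : ℤ) + (E.card : ℤ)) ∧
  ∀ u v : V, s(u, v) ∈ E → fv u + fe s(u, v) + fv v = k

/-- A super edge-magic labeling: an edge-magic labeling whose vertex labels are `[1, p]`. -/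
def IsSuperEdgeMagicLabeling {V : Type*} [Fintype V] [DecidableEq V] (E : Finset (Sym2 V))
    (fv : V → ℤ) (fe : Sym2 V → ℤ) (k : ℤ) : Prop :=
  IsEdgeMagicLabeling E fv fe k ∧
  Finset.univ.image fv = Finset.Icc 1 (Fintype.card V : ℤ)

lemma image_const_sub_Icc' (c a b : ℤ) :
    (Finset.Icc a b).image (fun x => c - x) = Finset.Icc (c - b) (c - a) := by
  ext x
  simp only [Finset.mem_image, Finset.mem_Icc]
  constructor
  · rintro ⟨y, hy, rfl⟩; omega
  · intro h; exact ⟨c - x, by omega, by omega⟩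

lemma edgeSum_mk {V : Type*} (g : V → ℤ) (u v : V) : edgeSum g s(u, v) = g u + g v := rfl

lemma part2 {V : Type*} [Fintype V] [DecidableEq V] (E : Finset (Sym2 V))
    (g : V → ℤ) (hg : Finset.univ.image g = Finset.Icc 1 (Fintype.card V : ℤ))
    (m : ℤ) (hS : E.image (edgeSum g) = Finset.Icc m (m + (E.card : ℤ) - 1)) :
    ∃ fe, IsSuperEdgeMagicLabeling E g fe
      ((Fintype.card V : ℤ) + (E.card : ℤ) + m) := by
  set p : ℤ := (Fintype.card V : ℤ)
  set q : ℤ := (E.card : ℤ)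
  have hp : 0 ≤ p := Int.ofNat_nonneg _
  have hq : 0 ≤ q := Int.ofNat_nonneg _
  refine ⟨fun e => p + q + m - edgeSum g e, ⟨?_, ?_⟩, hg⟩
  · have himg : E.image (fun e => p + q + m - edgeSum g e)
        = Finset.Icc (p + 1) (p + q) := by
      have : E.image (fun e => p + q + m - edgeSum g e)
          = (E.image (edgeSum g)).image (fun x => p + q + m - x) := by
        rw [Finset.image_image]; rfl
      rw [this, hS, image_const_sub_Icc']
      congr 1 <;> ring
    rw [hg, himg]
    ext x
    simp only [Finset.mem_union, Finset.mem_Icc]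
    omega
  · intro u v huv
    simp only []; rw [edgeSum_mk]; ring
/-- A `(p,q)`-graph `G` is super edge-magic if and only if there is a bijection
`g : V(G) → [1,p]` such that `{g(u)+g(v) : uv ∈ E(G)}` is a set of `q` consecutive
integers; moreover, such a `g` extends to a super edge-magic labeling of valence
`p + q + min S`. -/
theorem stmt0 {V : Type*} [Fintype V] [DecidableEq V] (E : Finset (Sym2 V)) :
    ((∃ fv fe k, IsSuperEdgeMagicLabeling E fv fe k) ↔
      ∃ g : V → ℤ, Finset.univ.image g = Finset.Icc 1 (Fintype.card V : ℤ) ∧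
        ∃ m : ℤ, E.image (edgeSum g) = Finset.Icc m (m + (E.card : ℤ) - 1)) ∧
    (∀ g : V → ℤ, Finset.univ.image g = Finset.Icc 1 (Fintype.card V : ℤ) →
      ∀ m : ℤ, E.image (edgeSum g) = Finset.Icc m (m + (E.card : ℤ) - 1) →
        ∃ fe, IsSuperEdgeMagicLabeling E g fe
          ((Fintype.card V : ℤ) + (E.card : ℤ) + m)) := by
  constructor
  · constructor
    · rintro ⟨fv, fe, k, ⟨⟨hunion, hmagic⟩, hv⟩⟩
      set p : ℤ := (Fintype.card V : ℤ)
      set q : ℤ := (E.card : ℤ)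
      have hp : 0 ≤ p := Int.ofNat_nonneg _
      have hq : 0 ≤ q := Int.ofNat_nonneg _
      refine ⟨fv, hv, k - p - q, ?_⟩
      -- first: E.image fe = Icc (p+1) (p+q)
      have hsub : Finset.Icc (p + 1) (p + q) ⊆ E.image fe := by
        intro x hx
        rw [Finset.mem_Icc] at hx
        have hx' : x ∈ Finset.univ.image fv ∪ E.image fe := by
          rw [hunion, Finset.mem_Icc]; omega
        rcases Finset.mem_union.mp hx' with h | h
        · rw [hv, Finset.mem_Icc] at h; omega
        · exact h
      have hcard : (E.image fe).card ≤ (Finset.Icc (p + 1) (p + q)).card := by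
        calc (E.image fe).card ≤ E.card := Finset.card_image_le
          _ = (Finset.Icc (p + 1) (p + q)).card := by
              rw [Int.card_Icc]
              simp only [q]
              omega
      have hfe : E.image fe = Finset.Icc (p + 1) (p + q) :=
        (Finset.eq_of_subset_of_card_le hsub hcard).symm
      -- edgeSum fv e = k - fe e on E
      have hsum : ∀ e ∈ E, edgeSum fv e = k - fe e := by
        intro e he
        induction e using Sym2.ind with
        | _ u v =>
          have := hmagic u v he
          rw [edgeSum_mk]; omega
      have : E.image (edgeSum fv) = E.image (fun e => k - fe e) :=
        Finset.image_congr fun e he => hsum e he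
      rw [this]
      have : E.image (fun e => k - fe e) = (E.image fe).image (fun x => k - x) := by
        rw [Finset.image_image]; rfl
      rw [this, hfe, image_const_sub_Icc']
      congr 1 <;> ring
    · rintro ⟨g, hg, m, hS⟩
      obtain ⟨fe, hfe⟩ := part2 E g hg m hS
      exact ⟨g, fe, _, hfe⟩
  · exact fun g hg m hS => part2 E g hg m hS
end

section
/- Let f be a super edge-magic labeling of a (p,q)-graph G. Define f^c on vertices by f^c(x) = p + 1 − f(x) for all x ∈ V(G), and on each edge uv by f^c(uv) = p + q + s_min − f^c(u) − f^c(v), where s_min = min{f^c(a)+f^c(b) : ab ∈ E(G)}. Then f^c is a super edge-magic labeling of G, and its valence satisfies val(f^c) = 4p + q + 3 − val(f). -/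
open Finset

/-- The super edge-magic complementary labeling `f^c` of a super edge-magic labeling `f`
(given on vertices by `f^c(x) = p + 1 - f(x)` and on each edge `uv` by
`f^c(uv) = p + q + s_min - f^c(u) - f^c(v)`, where `s_min` is the minimum induced edge sum
of `f^c`) is again a super edge-magic labeling, with valence `4p + q + 3 - val(f)`. -/
theorem stmt2 {V : Type*} [Fintype V] [DecidableEq V] (E : Finset (Sym2 V))
    (hE : E.Nonempty) (fv : V → ℤ) (fe : Sym2 V → ℤ) (k : ℤ)
    (hf : IsSuperEdgeMagicLabeling E fv fe k) :
    IsSuperEdgeMagicLabeling E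
      (fun x => (Fintype.card V : ℤ) + 1 - fv x)
      (fun e => (Fintype.card V : ℤ) + (E.card : ℤ) +
          (E.image (edgeSum fun x => (Fintype.card V : ℤ) + 1 - fv x)).min'
            (hE.image _) -
          edgeSum (fun x => (Fintype.card V : ℤ) + 1 - fv x) e)
      (4 * (Fintype.card V : ℤ) + (E.card : ℤ) + 3 - k) := by
  obtain ⟨⟨hunion, hmagic⟩, hvert⟩ := hf
  have hp0 : (0:ℤ) ≤ (Fintype.card V : ℤ) := Int.natCast_nonneg _
  set p : ℤ := (Fintype.card V : ℤ) with hp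
  set q : ℤ := (E.card : ℤ) with hq
  have hq1 : (1:ℤ) ≤ q := by rw [hq]; exact_mod_cast Finset.card_pos.mpr hE
  -- the edge labels of f are exactly [p+1, p+q]
  have hsub : Finset.Icc (p+1) (p+q) ⊆ E.image fe := by
    intro x hx
    rw [Finset.mem_Icc] at hx
    have hxu : x ∈ Finset.univ.image fv ∪ E.image fe := by
      rw [hunion, Finset.mem_Icc]; omega
    rcases Finset.mem_union.mp hxu with h | h
    · rw [hvert, Finset.mem_Icc] at h; omega
    · exact h
  have hcard : (Finset.Icc (p+1) (p+q)).card = E.card := by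
    rw [Int.card_Icc]
    have h1 : p + q + 1 - (p+1) = q := by ring
    rw [h1, hq, Int.toNat_natCast]
  have hedge : E.image fe = Finset.Icc (p+1) (p+q) :=
    (Finset.eq_of_subset_of_card_le hsub (hcard ▸ Finset.card_image_le)).symm
  have hfe : ∀ e ∈ E, p + 1 ≤ fe e ∧ fe e ≤ p + q := by
    intro e he
    have : fe e ∈ Finset.Icc (p+1) (p+q) := hedge ▸ Finset.mem_image_of_mem fe he
    exact Finset.mem_Icc.mp this
  set gv : V → ℤ := fun x => p + 1 - fv x with hgv
  have hes : ∀ u v : V, edgeSum gv s(u,v) = gv u + gv v := fun u v => rfl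
  have hkey : ∀ e ∈ E, edgeSum gv e = 2*p + 2 - k + fe e := by
    intro e he
    induction e using Sym2.inductionOn with
    | hf u v =>
      have hm := hmagic u v he
      rw [hes]
      simp only [hgv]
      linarith
  set S := E.image (edgeSum gv) with hS
  have hmem : 3*p + 3 - k ∈ S := by
    have hpq : p + 1 ∈ E.image fe := hsub (by rw [Finset.mem_Icc]; omega)
    obtain ⟨e0, he0, hfe0⟩ := Finset.mem_image.mp hpq
    rw [hS, Finset.mem_image]
    exact ⟨e0, he0, by rw [hkey e0 he0, hfe0]; ring⟩
  have hmin : ∀ h : S.Nonempty, S.min' h = 3*p + 3 - k := by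
    intro h
    apply le_antisymm (Finset.min'_le _ _ hmem)
    apply Finset.le_min'
    intro y hy
    obtain ⟨e, he, rfl⟩ := Finset.mem_image.mp hy
    have h1 := hkey e he
    have h2 := (hfe e he).1
    omega
  refine ⟨⟨?_, ?_⟩, ?_⟩
  · -- union of images is [1, p+q]
    have hvimg : Finset.univ.image gv = Finset.Icc 1 p := by
      have h1 : Finset.univ.image gv = (Finset.univ.image fv).image (fun t => p + 1 - t) := by
        rw [Finset.image_image]
        apply Finset.image_congr
        intro x _
        simp [hgv]
      rw [h1, hvert]
      ext x
      simp only [Finset.mem_image, Finset.mem_Icc]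
      constructor
      · rintro ⟨t, ht, rfl⟩; omega
      · intro hx; exact ⟨p + 1 - x, by omega, by ring⟩
    have heimg : E.image (fun e => p + q + S.min' (hE.image (edgeSum gv)) - edgeSum gv e)
        = Finset.Icc (p+1) (p+q) := by
      have h1 : E.image (fun e => p + q + S.min' (hE.image (edgeSum gv)) - edgeSum gv e)
          = E.image (fun e => 2*p + q + 1 - fe e) := by
        apply Finset.image_congr
        intro e he
        dsimp only
        rw [hmin, hkey e he]
        ring
      have h2 : E.image (fun e => 2*p + q + 1 - fe e)
          = (E.image fe).image (fun t => 2*p + q + 1 - t) := by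
        rw [Finset.image_image]; rfl
      rw [h1, h2, hedge]
      ext x
      simp only [Finset.mem_image, Finset.mem_Icc]
      constructor
      · rintro ⟨t, ht, rfl⟩; omega
      · intro hx; exact ⟨2*p + q + 1 - x, by omega, by ring⟩
    rw [hvimg, heimg]
    ext x
    simp only [Finset.mem_union, Finset.mem_Icc]
    omega
  · -- the magic condition
    intro u v huv
    dsimp only
    rw [hes, hmin]
    have := hkey s(u,v) huv
    rw [hes] at this
    linarith
  · -- vertex labels are [1, p]
    have h1 : Finset.univ.image gv = (Finset.univ.image fv).image (fun t => p + 1 - t) := by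
      rw [Finset.image_image]
      apply Finset.image_congr
      intro x _
      simp [hgv]
    rw [h1, hvert]
    ext x
    simp only [Finset.mem_image, Finset.mem_Icc]
    constructor
    · rintro ⟨t, ht, rfl⟩; omega
    · intro hx; exact ⟨p + 1 - x, by omega, by ring⟩
end

section
/- Let f be a super edge-magic labeling of a (p,q)-graph G with p = q. Then the odd labeling o(f), defined by o(f)(x) = 2f(x) − 1 for all x ∈ V(G) and o(f)(xy) = 2·val(f) − 2p − 2 − o(f)(x) − o(f)(y) for all xy ∈ E(G), is an edge-magic labeling of G with valence 2·val(f) − 2p − 2; and the even labeling e(f), defined by e(f)(x) = 2f(x) for all x ∈ V(G) and e(f)(xy) = 2·val(f) − 2p − 1 − e(f)(x) − e(f)(y) for all xy ∈ E(G), is an edge-magic labeling of G with valence 2·val(f) − 2p − 1. -/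
open Finset

/-- For a super edge-magic labeling `f` of a `(p,q)`-graph with `p = q`, the odd labeling
`o(f)` is edge-magic with valence `2 val(f) - 2p - 2`, and the even labeling `e(f)` is
edge-magic with valence `2 val(f) - 2p - 1`. -/
theorem stmt3 {V : Type*} [Fintype V] [DecidableEq V] (E : Finset (Sym2 V))
    (hpq : E.card = Fintype.card V)
    (fv : V → ℤ) (fe : Sym2 V → ℤ) (k : ℤ)
    (hf : IsSuperEdgeMagicLabeling E fv fe k) :
    IsEdgeMagicLabeling E
      (fun x => 2 * fv x - 1)
      (fun e => 2 * k - 2 * (Fintype.card V : ℤ) - 2 -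
        edgeSum (fun x => 2 * fv x - 1) e)
      (2 * k - 2 * (Fintype.card V : ℤ) - 2) ∧
    IsEdgeMagicLabeling E
      (fun x => 2 * fv x)
      (fun e => 2 * k - 2 * (Fintype.card V : ℤ) - 1 -
        edgeSum (fun x => 2 * fv x) e)
      (2 * k - 2 * (Fintype.card V : ℤ) - 1) := by
  obtain ⟨⟨hun, hmag⟩, hV⟩ := hf
  set p : ℤ := (Fintype.card V : ℤ) with hp
  rw [hpq] at hun
  -- edge labels are exactly [p+1, 2p]
  have hE : E.image fe = Finset.Icc (p + 1) (2 * p) := by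
    refine (Finset.eq_of_subset_of_card_le ?_ ?_).symm
    · intro x hx
      simp only [Finset.mem_Icc] at hx
      have hx2 : x ∈ Finset.univ.image fv ∪ E.image fe := by
        rw [hun]; simp only [Finset.mem_Icc]; omega
      rcases Finset.mem_union.mp hx2 with h | h
      · rw [hV] at h; simp only [Finset.mem_Icc] at h; omega
      · exact h
    · calc (E.image fe).card ≤ E.card := Finset.card_image_le
        _ = Fintype.card V := hpq
        _ = (Finset.Icc (p + 1) (2 * p)).card := by rw [Int.card_Icc, hp]; omega
  -- edge sums via the magic condition
  have hsum : ∀ e ∈ E, edgeSum fv e = k - fe e := by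
    intro e he
    induction e using Sym2.ind with
    | _ u v =>
      have := hmag u v he
      simp only [edgeSum, Sym2.lift_mk]
      linarith
  have hsum1 : ∀ e ∈ E, edgeSum (fun x => 2 * fv x - 1) e = 2 * (k - fe e) - 2 := by
    intro e he
    have h := hsum e he
    induction e using Sym2.ind with
    | _ u v =>
      simp only [edgeSum, Sym2.lift_mk] at h ⊢
      linarith
  have hsum2 : ∀ e ∈ E, edgeSum (fun x => 2 * fv x) e = 2 * (k - fe e) := by
    intro e he
    have h := hsum e he
    induction e using Sym2.ind with
    | _ u v =>
      simp only [edgeSum, Sym2.lift_mk] at h ⊢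
      linarith
  have hVim1 : Finset.univ.image (fun x => 2 * fv x - 1)
      = (Finset.Icc 1 p).image (fun n => 2 * n - 1) := by
    rw [← hV, Finset.image_image]; rfl
  have hVim2 : Finset.univ.image (fun x => 2 * fv x)
      = (Finset.Icc 1 p).image (fun n => 2 * n) := by
    rw [← hV, Finset.image_image]; rfl
  have hEim1 : E.image (fun e => 2 * k - 2 * p - 2 - edgeSum (fun x => 2 * fv x - 1) e)
      = (Finset.Icc (p + 1) (2 * p)).image (fun n => 2 * n - 2 * p) := by
    rw [← hE, Finset.image_image]
    refine Finset.image_congr ?_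
    intro e he
    simp only [Function.comp]
    rw [hsum1 e he]; ring
  have hEim2 : E.image (fun e => 2 * k - 2 * p - 1 - edgeSum (fun x => 2 * fv x) e)
      = (Finset.Icc (p + 1) (2 * p)).image (fun n => 2 * n - 2 * p - 1) := by
    rw [← hE, Finset.image_image]
    refine Finset.image_congr ?_
    intro e he
    simp only [Function.comp]
    rw [hsum2 e he]; ring
  constructor
  · constructor
    · rw [hpq, ← hp, hVim1, hEim1]
      ext a
      simp only [Finset.mem_union, Finset.mem_image, Finset.mem_Icc]
      constructor
      · rintro (⟨n, ⟨h1, h2⟩, rfl⟩ | ⟨n, ⟨h1, h2⟩, rfl⟩) <;> omega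
      · rintro ⟨h1, h2⟩
        rcases Int.even_or_odd a with ⟨m, hm⟩ | ⟨m, hm⟩
        · exact Or.inr ⟨m + p, ⟨by omega, by omega⟩, by omega⟩
        · exact Or.inl ⟨m + 1, ⟨by omega, by omega⟩, by omega⟩
    · intro u v _
      simp only [edgeSum, Sym2.lift_mk]
      ring
  · constructor
    · rw [hpq, ← hp, hVim2, hEim2]
      ext a
      simp only [Finset.mem_union, Finset.mem_image, Finset.mem_Icc]
      constructor
      · rintro (⟨n, ⟨h1, h2⟩, rfl⟩ | ⟨n, ⟨h1, h2⟩, rfl⟩) <;> omega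
      · rintro ⟨h1, h2⟩
        rcases Int.even_or_odd a with ⟨m, hm⟩ | ⟨m, hm⟩
        · exact Or.inl ⟨m, ⟨by omega, by omega⟩, by omega⟩
        · exact Or.inr ⟨m + p + 1, ⟨by omega, by omega⟩, by omega⟩
    · intro u v _
      simp only [edgeSum, Sym2.lift_mk]
      ring
end

section
/- Let D be an edge-magic digraph and let h : E(D) → S_p^k be any function. Then the digraph D ⊗_h S_p^k is edge-magic. Moreover, if D is super edge-magic, then D ⊗_h S_p^k is super edge-magic. -/
open Finset

/-- `(fv, fa)` is an edge-magic labeling with valence `k` of the digraph with vertex set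
`Vs` and arc set `A` (i.e. of its underlying graph): the labels form a bijection from
`V ∪ E` onto `[1, |V| + |E|]` and every arc `(u,v)` satisfies `fv u + fa (u,v) + fv v = k`. -/
def DIsEdgeMagic {β : Type*} [DecidableEq β] (Vs : Finset β) (A : Finset (β × β))
    (fv : β → ℤ) (fa : β × β → ℤ) (k : ℤ) : Prop :=
  Vs.image fv ∪ A.image fa = Finset.Icc 1 ((Vs.card : ℤ) + (A.card : ℤ)) ∧
  ∀ a ∈ A, fv a.1 + fa a + fv a.2 = k

/-- A super edge-magic labeling of a digraph: edge-magic and the vertex labels are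
exactly `[1, |V|]`. -/
def DIsSuperEdgeMagic {β : Type*} [DecidableEq β] (Vs : Finset β) (A : Finset (β × β))
    (fv : β → ℤ) (fa : β × β → ℤ) (k : ℤ) : Prop :=
  DIsEdgeMagic Vs A fv fa k ∧ Vs.image fv = Finset.Icc 1 (Vs.card : ℤ)

/-- Membership in the family `S_p^k`: a digraph on the vertex set `[1,p] ⊆ ℤ`
(vertices named after their labels), with exactly `p` arcs, whose induced edge sums
are exactly `{k, k+1, …, k+p-1}`. -/
def memSpk (p : ℕ) (k : ℤ) (F : Finset (ℤ × ℤ)) : Prop :=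
  (∀ a ∈ F, a.1 ∈ Finset.Icc (1 : ℤ) (p : ℤ) ∧ a.2 ∈ Finset.Icc (1 : ℤ) (p : ℤ)) ∧
  F.card = p ∧
  F.image (fun a => a.1 + a.2) = Finset.Icc k (k + (p : ℤ) - 1)

/-- The arc set of the product `D ⊗_h Γ`, where `D` has arc set `A` and `h` assigns to
each arc of `D` a digraph on a vertex set contained in `ℤ`:
`((a,i),(b,j))` is an arc iff `(a,b) ∈ A` and `(i,j) ∈ h (a,b)`. -/
def prodArcs {α : Type*} [DecidableEq α] (A : Finset (α × α))
    (h : α × α → Finset (ℤ × ℤ)) : Finset ((α × ℤ) × (α × ℤ)) :=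
  A.biUnion fun ab => (h ab).image fun ij => ((ab.1, ij.1), (ab.2, ij.2))

/-- Isomorphism of digraphs given by vertex sets and arc sets. -/
def DigraphIso {β γ : Type*} [DecidableEq β] [DecidableEq γ]
    (V1 : Finset β) (A1 : Finset (β × β)) (V2 : Finset γ) (A2 : Finset (γ × γ)) : Prop :=
  ∃ φ : β → γ, Set.InjOn φ ↑V1 ∧ V1.image φ = V2 ∧ A1.image (Prod.map φ φ) = A2

/-- Isomorphism of labeled digraphs: a digraph isomorphism preserving all vertex and
arc labels. -/
def LabeledDigraphIso {β γ : Type*} [DecidableEq β] [DecidableEq γ]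
    (V1 : Finset β) (A1 : Finset (β × β)) (fv1 : β → ℤ) (fa1 : β × β → ℤ)
    (V2 : Finset γ) (A2 : Finset (γ × γ)) (fv2 : γ → ℤ) (fa2 : γ × γ → ℤ) : Prop :=
  ∃ φ : β → γ, Set.InjOn φ ↑V1 ∧ V1.image φ = V2 ∧
    A1.image (Prod.map φ φ) = A2 ∧
    (∀ x ∈ V1, fv2 (φ x) = fv1 x) ∧
    (∀ a ∈ A1, fa2 (φ a.1, φ a.2) = fa1 a)

/-- The vertex labels of the labeling of `D ⊗_h S_p^k` induced by a labeling `gv` of the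
vertices of `D`: the vertex `(a,i)` receives `p(gv a - 1) + i`. -/
def inducedVert {α : Type*} (p : ℕ) (gv : α → ℤ) : α × ℤ → ℤ :=
  fun x => (p : ℤ) * (gv x.1 - 1) + x.2

/-- The arc labels of the labeling of `D ⊗_h S_p^k` induced by an arc labeling `ga` of
`D`: the arc `((a,i),(b,j))` receives `p(ga (a,b) - 1) + (k + p) - (i + j)`. -/
def inducedArc {α : Type*} (p : ℕ) (k : ℤ) (ga : α × α → ℤ) :
    (α × ℤ) × (α × ℤ) → ℤ :=
  fun x => (p : ℤ) * (ga (x.1.1, x.2.1) - 1) + (k + (p : ℤ)) - (x.1.2 + x.2.2)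


def psiM (p : ℕ) : ℤ × ℤ → ℤ := fun x => (p : ℤ) * (x.1 - 1) + x.2

lemma psi_image (p : ℕ) (N : ℤ) :
    ((Finset.Icc 1 N) ×ˢ (Finset.Icc 1 (p : ℤ))).image (psiM p)
      = Finset.Icc 1 ((p : ℤ) * N) := by
  ext x
  simp only [psiM, Finset.mem_image, Finset.mem_product, Finset.mem_Icc, Prod.exists]
  constructor
  · rintro ⟨s, i, ⟨⟨hs1, hs2⟩, hi1, hi2⟩, rfl⟩
    constructor
    · nlinarith
    · nlinarith
  · rintro ⟨hx1, hx2⟩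
    have hp : (0 : ℤ) < p := by
      rcases Nat.eq_zero_or_pos p with h0 | h0
      · subst h0; simp at hx2; omega
      · exact_mod_cast h0
    refine ⟨(x - 1) / p + 1, (x - 1) % p + 1, ⟨⟨?_, ?_⟩, ?_, ?_⟩, ?_⟩
    · have := Int.ediv_nonneg (by omega : (0:ℤ) ≤ x - 1) hp.le
      omega
    · have : (x - 1) / p < N := by
        rw [Int.ediv_lt_iff_lt_mul hp]
        nlinarith
      omega
    · have := Int.emod_nonneg (x - 1) hp.ne'
      omega
    · have := Int.emod_lt_of_pos (x - 1) hp
      omega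
    · have h := Int.mul_ediv_add_emod (x - 1) (p : ℤ)
      linear_combination h

lemma shift_image (p : ℕ) (k : ℤ) :
    (Finset.Icc k (k + (p : ℤ) - 1)).image (fun s => k + (p : ℤ) - s)
      = Finset.Icc 1 (p : ℤ) := by
  ext x
  simp only [Finset.mem_image, Finset.mem_Icc]
  constructor
  · rintro ⟨s, ⟨h1, h2⟩, rfl⟩; omega
  · rintro ⟨h1, h2⟩; exact ⟨k + p - x, by omega, by ring⟩

lemma card_prodArcs {α : Type*} [DecidableEq α] (A : Finset (α × α)) (p : ℕ)
    (h : α × α → Finset (ℤ × ℤ)) (hc : ∀ a ∈ A, (h a).card = p) :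
    (prodArcs A h).card = A.card * p := by
  rw [prodArcs, Finset.card_biUnion]
  · rw [Finset.sum_congr rfl (fun ab hab => ?_), Finset.sum_const, smul_eq_mul]
    rw [Finset.card_image_of_injective _ (fun ij ij' hij => ?_)]
    · exact hc ab hab
    · simpa [Prod.ext_iff] using hij
  · intro x hx y hy hxy
    simp only [Finset.disjoint_left, Finset.mem_image]
    rintro e ⟨ij, _, rfl⟩ ⟨ij', _, he⟩
    apply hxy
    simp only [Prod.ext_iff] at he
    exact Prod.ext he.1.1.symm he.2.1.symm

lemma vert_image {α : Type*} [DecidableEq α] (Vs : Finset α) (p : ℕ) (fv : α → ℤ) :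
    (Vs ×ˢ Finset.Icc (1 : ℤ) (p : ℤ)).image (inducedVert p fv)
      = ((Vs.image fv) ×ˢ Finset.Icc (1 : ℤ) (p : ℤ)).image (psiM p) := by
  ext x
  simp only [inducedVert, psiM, Finset.mem_image, Finset.mem_product, Prod.exists]
  constructor
  · rintro ⟨a, i, ⟨ha, hi⟩, rfl⟩
    exact ⟨fv a, i, ⟨⟨a, ha, rfl⟩, hi⟩, rfl⟩
  · rintro ⟨s, i, ⟨⟨a, ha, rfl⟩, hi⟩, rfl⟩
    exact ⟨a, i, ⟨ha, hi⟩, rfl⟩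

lemma arc_image {α : Type*} [DecidableEq α] (A : Finset (α × α)) (p : ℕ) (k : ℤ)
    (h : α × α → Finset (ℤ × ℤ)) (hh : ∀ a ∈ A, memSpk p k (h a)) (fa : α × α → ℤ) :
    (prodArcs A h).image (inducedArc p k fa)
      = ((A.image fa) ×ˢ Finset.Icc (1 : ℤ) (p : ℤ)).image (psiM p) := by
  ext x
  simp only [Finset.mem_image]
  constructor
  · rintro ⟨e, he, rfl⟩
    simp only [prodArcs, Finset.mem_biUnion, Finset.mem_image] at he
    obtain ⟨ab, hab, ij, hij, rfl⟩ := he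
    have hsum : ij.1 + ij.2 ∈ Finset.Icc k (k + (p : ℤ) - 1) := by
      rw [← (hh ab hab).2.2]
      exact Finset.mem_image_of_mem _ hij
    rw [Finset.mem_Icc] at hsum
    refine ⟨(fa ab, k + (p : ℤ) - (ij.1 + ij.2)), ?_, ?_⟩
    · rw [Finset.mem_product]
      exact ⟨Finset.mem_image_of_mem _ hab, by rw [Finset.mem_Icc]; omega⟩
    · simp only [inducedArc, psiM, Prod.mk.eta]
      ring
  · rintro ⟨⟨s, t⟩, hst, rfl⟩
    rw [Finset.mem_product] at hst
    obtain ⟨hs, ht⟩ := hst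
    rw [Finset.mem_image] at hs
    obtain ⟨ab, hab, rfl⟩ := hs
    rw [Finset.mem_Icc] at ht
    have hsum : k + (p : ℤ) - t ∈ ((h ab).image (fun a => a.1 + a.2)) := by
      rw [(hh _ hab).2.2, Finset.mem_Icc]; omega
    rw [Finset.mem_image] at hsum
    obtain ⟨ij, hij, hijsum⟩ := hsum
    refine ⟨((ab.1, ij.1), (ab.2, ij.2)), ?_, ?_⟩
    · simp only [prodArcs, Finset.mem_biUnion, Finset.mem_image]
      exact ⟨ab, hab, ij, hij, rfl⟩
    · simp only [inducedArc, psiM, Prod.mk.eta]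
      linarith [hijsum]

/-- If `D` is an edge-magic digraph and `h : E(D) → S_p^k` is any function, then
`D ⊗_h S_p^k` is edge-magic; moreover if `D` is super edge-magic then so is
`D ⊗_h S_p^k`. -/
theorem stmt5 {α : Type*} [DecidableEq α] (Vs : Finset α) (A : Finset (α × α))
    (hA : ∀ a ∈ A, a.1 ∈ Vs ∧ a.2 ∈ Vs)
    (p : ℕ) (k : ℤ) (h : α × α → Finset (ℤ × ℤ))
    (hh : ∀ a ∈ A, memSpk p k (h a)) :
    ((∃ fv fa κ, DIsEdgeMagic Vs A fv fa κ) →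
      ∃ gv ga κ', DIsEdgeMagic (Vs ×ˢ Finset.Icc (1 : ℤ) (p : ℤ)) (prodArcs A h)
        gv ga κ') ∧
    ((∃ fv fa κ, DIsSuperEdgeMagic Vs A fv fa κ) →
      ∃ gv ga κ', DIsSuperEdgeMagic (Vs ×ˢ Finset.Icc (1 : ℤ) (p : ℤ)) (prodArcs A h)
        gv ga κ') := by
  have hicc : (Finset.Icc (1 : ℤ) (p : ℤ)).card = p := by
    rw [Int.card_Icc]
    simp
  have hcV : (Vs ×ˢ Finset.Icc (1 : ℤ) (p : ℤ)).card = Vs.card * p := by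
    rw [Finset.card_product, hicc]
  have hcA : (prodArcs A h).card = A.card * p :=
    card_prodArcs A p h (fun a ha => (hh a ha).2.1)
  have key : ∀ fv fa κ, DIsEdgeMagic Vs A fv fa κ →
      DIsEdgeMagic (Vs ×ˢ Finset.Icc (1 : ℤ) (p : ℤ)) (prodArcs A h)
        (inducedVert p fv) (inducedArc p k fa) ((p : ℤ) * κ - 2 * p + k) := by
    rintro fv fa κ ⟨hbij, hmag⟩
    constructor
    · rw [vert_image, arc_image A p k h hh fa, ← Finset.image_union,
        ← Finset.union_product, hbij, psi_image, hcV, hcA]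
      congr 1
      push_cast
      ring
    · intro e he
      simp only [prodArcs, Finset.mem_biUnion, Finset.mem_image] at he
      obtain ⟨ab, hab, ij, hij, rfl⟩ := he
      simp only [inducedVert, inducedArc, Prod.mk.eta]
      linear_combination (p : ℤ) * (hmag ab hab)
  constructor
  · rintro ⟨fv, fa, κ, hf⟩
    exact ⟨_, _, _, key fv fa κ hf⟩
  · rintro ⟨fv, fa, κ, hf, hsup⟩
    refine ⟨inducedVert p fv, inducedArc p k fa, _, key fv fa κ hf, ?_⟩
    rw [vert_image, hsup, psi_image, hcV]
    congr 1
    push_cast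
    ring
end

section
/- Let f be an edge-magic labeling of a digraph D and let h : E(D) → S_p^k be any function. Then there exists a function h̄ : E(D) → S_p^{p+3−k} such that D ⊗_h S_p^k ≅ D ⊗_{h̄} S_p^{p+3−k}, and the complementary labeling of the labeling of D ⊗_h S_p^k induced by f is isomorphic (as a labeled digraph) to the labeling of D ⊗_{h̄} S_p^{p+3−k} induced by the complementary labeling f̄ of f. -/
open Finset

/-- Let `f` be an edge-magic labeling of a digraph `D` and `h : E(D) → S_p^k`. Then there
is `h̄ : E(D) → S_p^{p+3-k}` such that `D ⊗_h S_p^k ≅ D ⊗_h̄ S_p^{p+3-k}` and the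
complementary labeling of the labeling induced by `f` on `D ⊗_h S_p^k` is isomorphic, as
a labeled digraph, to the labeling induced by the complementary labeling `f̄` on
`D ⊗_h̄ S_p^{p+3-k}`. -/
theorem stmt7 {α : Type*} [DecidableEq α] (Vs : Finset α) (A : Finset (α × α))
    (hA : ∀ a ∈ A, a.1 ∈ Vs ∧ a.2 ∈ Vs)
    (p : ℕ) (k : ℤ) (h : α × α → Finset (ℤ × ℤ))
    (hh : ∀ a ∈ A, memSpk p k (h a))
    (fv : α → ℤ) (fa : α × α → ℤ) (κ : ℤ)
    (hf : DIsEdgeMagic Vs A fv fa κ) :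
    ∃ hb : α × α → Finset (ℤ × ℤ),
      (∀ a ∈ A, memSpk p ((p : ℤ) + 3 - k) (hb a)) ∧
      DigraphIso (Vs ×ˢ Finset.Icc (1 : ℤ) (p : ℤ)) (prodArcs A h)
        (Vs ×ˢ Finset.Icc (1 : ℤ) (p : ℤ)) (prodArcs A hb) ∧
      LabeledDigraphIso
        (Vs ×ˢ Finset.Icc (1 : ℤ) (p : ℤ)) (prodArcs A h)
        -- complementary labeling of the labeling induced by `f`
        (fun x => (p : ℤ) * ((Vs.card : ℤ) + (A.card : ℤ)) + 1 - inducedVert p fv x)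
        (fun x => (p : ℤ) * ((Vs.card : ℤ) + (A.card : ℤ)) + 1 - inducedArc p k fa x)
        (Vs ×ˢ Finset.Icc (1 : ℤ) (p : ℤ)) (prodArcs A hb)
        -- labeling induced by the complementary labeling `f̄` of `f`
        (inducedVert p (fun a => (Vs.card : ℤ) + (A.card : ℤ) + 1 - fv a))
        (inducedArc p ((p : ℤ) + 3 - k)
          (fun a => (Vs.card : ℤ) + (A.card : ℤ) + 1 - fa a)) := by

  classical
  set N : ℤ := (Vs.card : ℤ) + (A.card : ℤ) with hN
  -- the reflection on [1,p]
  set σ : ℤ × ℤ → ℤ × ℤ := fun ij => ((p : ℤ) + 1 - ij.1, (p : ℤ) + 1 - ij.2) with hσ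
  refine ⟨fun a => (h a).image σ, ?_, ?_, ?_⟩
  · intro a ha
    obtain ⟨h1, h2, h3⟩ := hh a ha
    refine ⟨?_, ?_, ?_⟩
    · intro b hb
      simp only [Finset.mem_image] at hb
      obtain ⟨c, hc, rfl⟩ := hb
      obtain ⟨hc1, hc2⟩ := h1 c hc
      simp only [hσ, Finset.mem_Icc] at hc1 hc2 ⊢
      omega
    · rw [Finset.card_image_of_injective _ (fun x y hxy => by
        simp only [hσ, Prod.ext_iff] at hxy ⊢
        omega)]
      exact h2
    · rw [Finset.image_image]
      have : ((fun a : ℤ × ℤ => a.1 + a.2) ∘ σ) =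
          (fun s => 2 * (p : ℤ) + 2 - s) ∘ (fun a : ℤ × ℤ => a.1 + a.2) := by
        funext x; simp [hσ]; ring
      rw [this, ← Finset.image_image, h3]
      ext x
      simp only [Finset.mem_image, Finset.mem_Icc]
      constructor
      · rintro ⟨s, hs, rfl⟩; omega
      · intro hx; exact ⟨2 * (p : ℤ) + 2 - x, by omega, by ring⟩
  · refine ⟨fun x => (x.1, (p : ℤ) + 1 - x.2), ?_, ?_, ?_⟩
    · intro x _ y _ hxy
      simp only [Prod.ext_iff] at hxy ⊢
      exact ⟨hxy.1, by omega⟩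
    · ext x
      simp only [Finset.mem_image, Finset.mem_product, Finset.mem_Icc]
      constructor
      · rintro ⟨y, ⟨hy1, hy2⟩, rfl⟩
        exact ⟨hy1, by omega⟩
      · rintro ⟨hx1, hx2⟩
        exact ⟨(x.1, (p : ℤ) + 1 - x.2), ⟨hx1, by omega⟩, by simp⟩
    · unfold prodArcs
      rw [Finset.biUnion_image]
      refine Finset.biUnion_congr rfl fun ab hab => ?_
      rw [Finset.image_image, Finset.image_image]
      rfl
  · refine ⟨fun x => (x.1, (p : ℤ) + 1 - x.2), ?_, ?_, ?_, ?_, ?_⟩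
    · intro x _ y _ hxy
      simp only [Prod.ext_iff] at hxy ⊢
      exact ⟨hxy.1, by omega⟩
    · ext x
      simp only [Finset.mem_image, Finset.mem_product, Finset.mem_Icc]
      constructor
      · rintro ⟨y, ⟨hy1, hy2⟩, rfl⟩
        exact ⟨hy1, by omega⟩
      · rintro ⟨hx1, hx2⟩
        exact ⟨(x.1, (p : ℤ) + 1 - x.2), ⟨hx1, by omega⟩, by simp⟩
    · unfold prodArcs
      rw [Finset.biUnion_image]
      refine Finset.biUnion_congr rfl fun ab hab => ?_
      rw [Finset.image_image, Finset.image_image]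
      rfl
    · intro x _
      simp only [inducedVert]
      ring
    · intro a _
      simp only [inducedArc]
      ring
end

section
/- Let f be a super edge-magic labeling of an (n,m)-digraph D with m = n, and let h : E(D) → S_p^k be any function. Then there exists h̄ : E(D) → S_p^{p+3−k} such that the complementary labeling of the labeling of D ⊗_h S_p^k induced by the odd labeling o(f) is isomorphic (as a labeled digraph) to the labeling of D ⊗_{h̄} S_p^{p+3−k} induced by the even labeling e(f^c) of the super edge-magic complementary labeling f^c of f. -/
open Finset

/-- Let `f` be a super edge-magic labeling of an `(n,m)`-digraph `D` with `m = n`, and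
let `h : E(D) → S_p^k`. Then there is `h̄ : E(D) → S_p^{p+3-k}` such that the
complementary labeling of the labeling of `D ⊗_h S_p^k` induced by the odd labeling
`o(f)` is isomorphic, as a labeled digraph, to the labeling of `D ⊗_h̄ S_p^{p+3-k}`
induced by the even labeling `e(f^c)` of the super edge-magic complementary labeling
`f^c` of `f` (which has valence `4n + m + 3 - val(f)`). -/
theorem stmt9 {α : Type*} [DecidableEq α] (Vs : Finset α) (A : Finset (α × α))
    (hA : ∀ a ∈ A, a.1 ∈ Vs ∧ a.2 ∈ Vs) (hnm : A.card = Vs.card)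
    (p : ℕ) (k : ℤ) (h : α × α → Finset (ℤ × ℤ))
    (hh : ∀ a ∈ A, memSpk p k (h a))
    (fv : α → ℤ) (fa : α × α → ℤ) (κ : ℤ)
    (hf : DIsSuperEdgeMagic Vs A fv fa κ) :
    ∃ hb : α × α → Finset (ℤ × ℤ),
      (∀ a ∈ A, memSpk p ((p : ℤ) + 3 - k) (hb a)) ∧
      LabeledDigraphIso
        (Vs ×ˢ Finset.Icc (1 : ℤ) (p : ℤ)) (prodArcs A h)
        -- complementary labeling of the labeling induced by the odd labeling `o(f)`
        (fun x => (p : ℤ) * ((Vs.card : ℤ) + (A.card : ℤ)) + 1 -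
          inducedVert p (fun a => 2 * fv a - 1) x)
        (fun x => (p : ℤ) * ((Vs.card : ℤ) + (A.card : ℤ)) + 1 -
          inducedArc p k
            (fun ab => 2 * κ - 2 * (Vs.card : ℤ) - 2 -
              ((2 * fv ab.1 - 1) + (2 * fv ab.2 - 1))) x)
        (Vs ×ˢ Finset.Icc (1 : ℤ) (p : ℤ)) (prodArcs A hb)
        -- labeling induced by the even labeling `e(f^c)`
        (inducedVert p (fun a => 2 * ((Vs.card : ℤ) + 1 - fv a)))
        (inducedArc p ((p : ℤ) + 3 - k)
          (fun ab => 2 * (4 * (Vs.card : ℤ) + (A.card : ℤ) + 3 - κ) -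
            2 * (Vs.card : ℤ) - 1 -
            (2 * ((Vs.card : ℤ) + 1 - fv ab.1) +
              2 * ((Vs.card : ℤ) + 1 - fv ab.2)))) := by
  classical
  have hc : (A.card : ℤ) = (Vs.card : ℤ) := by exact_mod_cast hnm
  refine ⟨fun ab => (h ab).image (fun ij => ((p : ℤ) + 1 - ij.1, (p : ℤ) + 1 - ij.2)),
    ?_, ?_⟩
  · intro a ha
    obtain ⟨h1, h2, h3⟩ := hh a ha
    refine ⟨?_, ?_, ?_⟩
    · intro x hx
      simp only [mem_image] at hx
      obtain ⟨ij, hij, rfl⟩ := hx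
      obtain ⟨hi, hj⟩ := h1 ij hij
      simp only [mem_Icc] at *
      omega
    · rw [Finset.card_image_of_injOn]
      · exact h2
      · intro x _ y _ hxy
        simp only [Prod.ext_iff] at hxy
        ext <;> omega
    · rw [Finset.image_image]
      have heq : ((fun a : ℤ × ℤ => a.1 + a.2) ∘
          (fun ij : ℤ × ℤ => ((p : ℤ) + 1 - ij.1, (p : ℤ) + 1 - ij.2)))
          = (fun s => 2 * (p : ℤ) + 2 - s) ∘ (fun a : ℤ × ℤ => a.1 + a.2) := by
        funext x
        simp only [Function.comp_apply]
        ring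
      rw [heq, ← Finset.image_image, h3]
      ext x
      simp only [mem_Icc, mem_image]
      constructor
      · rintro ⟨s, hs, rfl⟩; omega
      · intro hx; exact ⟨2 * (p : ℤ) + 2 - x, by omega, by ring⟩
  · refine ⟨fun x => (x.1, (p : ℤ) + 1 - x.2), ?_, ?_, ?_, ?_, ?_⟩
    · intro x _ y _ hxy
      simp only [Prod.ext_iff] at hxy
      ext
      · exact hxy.1
      · omega
    · ext ⟨a, j⟩
      simp only [mem_image, Finset.mem_product, mem_Icc, Prod.ext_iff]
      constructor
      · rintro ⟨⟨b, i⟩, ⟨hb, hi1, hi2⟩, rfl, rfl⟩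
        exact ⟨hb, by omega, by omega⟩
      · rintro ⟨ha, hj1, hj2⟩
        exact ⟨(a, (p : ℤ) + 1 - j), ⟨ha, by omega, by omega⟩, rfl, by ring⟩
    · ext x
      simp only [prodArcs, mem_image, mem_biUnion, Prod.map]
      constructor
      · rintro ⟨y, ⟨ab, hab, ij, hij, rfl⟩, rfl⟩
        exact ⟨ab, hab, ((p : ℤ) + 1 - ij.1, (p : ℤ) + 1 - ij.2),
          ⟨ij, hij, rfl⟩, rfl⟩
      · rintro ⟨ab, hab, z, ⟨ij, hij, rfl⟩, rfl⟩
        exact ⟨((ab.1, ij.1), (ab.2, ij.2)), ⟨ab, hab, ij, hij, rfl⟩, rfl⟩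
    · intro x _
      simp only [inducedVert]
      rw [hc]
      ring
    · intro a _
      simp only [inducedArc]
      rw [hc]
      ring
end

section
/- Let f be a super edge-magic labeling of an (n,m)-digraph D with m = n, and let h : E(D) → S_p^k be any function. Then there exists h̄ : E(D) → S_p^{p+3−k} such that the complementary labeling of the labeling of D ⊗_h S_p^k induced by the even labeling e(f) is isomorphic (as a labeled digraph) to the labeling of D ⊗_{h̄} S_p^{p+3−k} induced by the odd labeling o(f^c) of the super edge-magic complementary labeling f^c of f. -/
open Finset

/-- Let `f` be a super edge-magic labeling of an `(n,m)`-digraph `D` with `m = n`, and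
let `h : E(D) → S_p^k`. Then there is `h̄ : E(D) → S_p^{p+3-k}` such that the
complementary labeling of the labeling of `D ⊗_h S_p^k` induced by the even labeling
`e(f)` is isomorphic, as a labeled digraph, to the labeling of `D ⊗_h̄ S_p^{p+3-k}`
induced by the odd labeling `o(f^c)` of the super edge-magic complementary labeling
`f^c` of `f` (which has valence `4n + m + 3 - val(f)`). -/
theorem stmt10 {α : Type*} [DecidableEq α] (Vs : Finset α) (A : Finset (α × α))
    (hA : ∀ a ∈ A, a.1 ∈ Vs ∧ a.2 ∈ Vs) (hnm : A.card = Vs.card)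
    (p : ℕ) (k : ℤ) (h : α × α → Finset (ℤ × ℤ))
    (hh : ∀ a ∈ A, memSpk p k (h a))
    (fv : α → ℤ) (fa : α × α → ℤ) (κ : ℤ)
    (hf : DIsSuperEdgeMagic Vs A fv fa κ) :
    ∃ hb : α × α → Finset (ℤ × ℤ),
      (∀ a ∈ A, memSpk p ((p : ℤ) + 3 - k) (hb a)) ∧
      LabeledDigraphIso
        (Vs ×ˢ Finset.Icc (1 : ℤ) (p : ℤ)) (prodArcs A h)
        -- complementary labeling of the labeling induced by the even labeling `e(f)`
        (fun x => (p : ℤ) * ((Vs.card : ℤ) + (A.card : ℤ)) + 1 -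
          inducedVert p (fun a => 2 * fv a) x)
        (fun x => (p : ℤ) * ((Vs.card : ℤ) + (A.card : ℤ)) + 1 -
          inducedArc p k
            (fun ab => 2 * κ - 2 * (Vs.card : ℤ) - 1 -
              (2 * fv ab.1 + 2 * fv ab.2)) x)
        (Vs ×ˢ Finset.Icc (1 : ℤ) (p : ℤ)) (prodArcs A hb)
        -- labeling induced by the odd labeling `o(f^c)`
        (inducedVert p (fun a => 2 * ((Vs.card : ℤ) + 1 - fv a) - 1))
        (inducedArc p ((p : ℤ) + 3 - k)
          (fun ab => 2 * (4 * (Vs.card : ℤ) + (A.card : ℤ) + 3 - κ) -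
            2 * (Vs.card : ℤ) - 2 -
            ((2 * ((Vs.card : ℤ) + 1 - fv ab.1) - 1) +
              (2 * ((Vs.card : ℤ) + 1 - fv ab.2) - 1)))) := by
  classical
  set ν : ℤ × ℤ → ℤ × ℤ := fun ij => ((p : ℤ) + 1 - ij.1, (p : ℤ) + 1 - ij.2) with hν
  have hνinj : Function.Injective ν := by
    intro x y hxy
    simp only [hν, Prod.mk.injEq] at hxy
    exact Prod.ext (by omega) (by omega)
  refine ⟨fun ab => (h ab).image ν, ?_, ?_⟩
  · intro a ha
    obtain ⟨h1, h2, h3⟩ := hh a ha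
    refine ⟨?_, ?_, ?_⟩
    · intro x hx
      simp only [Finset.mem_image] at hx
      obtain ⟨ij, hij, rfl⟩ := hx
      obtain ⟨hi, hj⟩ := h1 ij hij
      simp only [Finset.mem_Icc, hν] at *
      omega
    · rw [Finset.card_image_of_injective _ hνinj, h2]
    · rw [Finset.image_image]
      have he : ((fun a : ℤ × ℤ => a.1 + a.2) ∘ ν) =
          (fun s => 2 * ((p : ℤ) + 1) - s) ∘ (fun a : ℤ × ℤ => a.1 + a.2) := by
        funext x; simp only [hν, Function.comp]; ring
      rw [he, ← Finset.image_image, h3]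
      ext x
      simp only [Finset.mem_image, Finset.mem_Icc]
      constructor
      · rintro ⟨s, hs, rfl⟩; omega
      · intro hx; exact ⟨2 * ((p : ℤ) + 1) - x, by omega, by ring⟩
  · refine ⟨fun x => (x.1, (p : ℤ) + 1 - x.2), ?_, ?_, ?_, ?_, ?_⟩
    · intro x _ y _ hxy
      simp only [Prod.mk.injEq] at hxy
      exact Prod.ext hxy.1 (by omega)
    · ext x
      simp only [Finset.mem_image, Finset.mem_product, Finset.mem_Icc]
      constructor
      · rintro ⟨y, ⟨hy, h1, h2⟩, rfl⟩; exact ⟨hy, by omega, by omega⟩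
      · rintro ⟨hx, h1, h2⟩
        exact ⟨(x.1, (p : ℤ) + 1 - x.2), ⟨hx, by omega, by omega⟩, by simp⟩
    · unfold prodArcs
      rw [Finset.biUnion_image]
      refine Finset.biUnion_congr rfl ?_
      intro ab _
      rw [Finset.image_image, Finset.image_image]
      rfl
    · intro x _
      simp only [inducedVert, hnm]
      ring
    · intro a _
      simp only [inducedArc, hnm]
      ring
end

section
/- Let f be a super edge-magic labeling of a digraph D and let h : E(D) → S_p^k be any function. Then there exists h̄ : E(D) → S_p^{p+3−k} such that the super edge-magic complementary labeling (f̂)^c of the labeling f̂ of D ⊗_h S_p^k induced by f is isomorphic (as a labeled digraph) to the labeling of D ⊗_{h̄} S_p^{p+3−k} induced by the super edge-magic complementary labeling f^c of f. Moreover, val((f̂)^c) = val(hat(f^c)). -/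
open Finset

/-- Let `f` be a super edge-magic labeling of a digraph `D` and `h : E(D) → S_p^k`.
Then there is `h̄ : E(D) → S_p^{p+3-k}` such that the super edge-magic complementary
labeling `(f̂)^c` of the induced labeling `f̂` of `D ⊗_h S_p^k` (whose valence is
`4P + Q + 3 - val(f̂)`, `P`, `Q` being the order and size of the product, and whose arc
labels are `val((f̂)^c)` minus the labels of the endpoints) is isomorphic, as a labeled
digraph, to the labeling of `D ⊗_h̄ S_p^{p+3-k}` induced by the super edge-magic
complementary labeling `f^c` of `f`. Moreover `val((f̂)^c) = val(hat(f^c))`. -/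
theorem stmt11 {α : Type*} [DecidableEq α] (Vs : Finset α) (A : Finset (α × α))
    (hA : ∀ a ∈ A, a.1 ∈ Vs ∧ a.2 ∈ Vs)
    (p : ℕ) (k : ℤ) (h : α × α → Finset (ℤ × ℤ))
    (hh : ∀ a ∈ A, memSpk p k (h a))
    (fv : α → ℤ) (fa : α × α → ℤ) (κ : ℤ)
    (hf : DIsSuperEdgeMagic Vs A fv fa κ) :
    ∃ hb : α × α → Finset (ℤ × ℤ),
      (∀ a ∈ A, memSpk p ((p : ℤ) + 3 - k) (hb a)) ∧
      LabeledDigraphIso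
        (Vs ×ˢ Finset.Icc (1 : ℤ) (p : ℤ)) (prodArcs A h)
        -- the super edge-magic complementary labeling `(f̂)^c` of `f̂`
        (fun x => (p : ℤ) * (Vs.card : ℤ) + 1 - inducedVert p fv x)
        (fun x =>
          (4 * ((p : ℤ) * (Vs.card : ℤ)) + (p : ℤ) * (A.card : ℤ) + 3 -
              ((p : ℤ) * (κ - 3) + k + (p : ℤ))) -
            (((p : ℤ) * (Vs.card : ℤ) + 1 - inducedVert p fv x.1) +
              ((p : ℤ) * (Vs.card : ℤ) + 1 - inducedVert p fv x.2)))
        (Vs ×ˢ Finset.Icc (1 : ℤ) (p : ℤ)) (prodArcs A hb)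
        -- the labeling induced by the super edge-magic complementary labeling `f^c`
        (inducedVert p (fun a => (Vs.card : ℤ) + 1 - fv a))
        (inducedArc p ((p : ℤ) + 3 - k)
          (fun ab => (4 * (Vs.card : ℤ) + (A.card : ℤ) + 3 - κ) -
            (((Vs.card : ℤ) + 1 - fv ab.1) + ((Vs.card : ℤ) + 1 - fv ab.2)))) ∧
      -- equality of the valences
      4 * ((p : ℤ) * (Vs.card : ℤ)) + (p : ℤ) * (A.card : ℤ) + 3 -
          ((p : ℤ) * (κ - 3) + k + (p : ℤ))
        = (p : ℤ) * ((4 * (Vs.card : ℤ) + (A.card : ℤ) + 3 - κ) - 3) +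
            ((p : ℤ) + 3 - k) + (p : ℤ) := by
  classical
  refine ⟨fun ab => (h ab).image (fun ij => ((p : ℤ) + 1 - ij.1, (p : ℤ) + 1 - ij.2)),
    ?_, ?_, by ring⟩
  · intro a ha
    obtain ⟨hb1, hb2, hb3⟩ := hh a ha
    refine ⟨?_, ?_, ?_⟩
    · intro x hx
      simp only [Finset.mem_image] at hx
      obtain ⟨ij, hij, rfl⟩ := hx
      obtain ⟨h1, h2⟩ := hb1 ij hij
      simp only [Finset.mem_Icc] at *
      omega
    · rw [Finset.card_image_of_injective _ (by
        intro x y hxy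
        simp only [Prod.mk.injEq] at hxy
        exact Prod.ext (by omega) (by omega)), hb2]
    · rw [Finset.image_image]
      have : ((fun a : ℤ × ℤ => a.1 + a.2) ∘
          (fun ij : ℤ × ℤ => ((p : ℤ) + 1 - ij.1, (p : ℤ) + 1 - ij.2)))
          = (fun s => 2 * (p : ℤ) + 2 - s) ∘ (fun a : ℤ × ℤ => a.1 + a.2) := by
        funext ij; simp; ring
      rw [this, ← Finset.image_image, hb3]
      ext x
      simp only [Finset.mem_image, Finset.mem_Icc]
      constructor
      · rintro ⟨s, hs, rfl⟩; omega
      · intro hx; exact ⟨2 * (p : ℤ) + 2 - x, by omega, by omega⟩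
  · refine ⟨fun x => (x.1, (p : ℤ) + 1 - x.2), ?_, ?_, ?_, ?_, ?_⟩
    · intro x _ y _ hxy
      simp only [Prod.mk.injEq] at hxy
      exact Prod.ext hxy.1 (by omega)
    · ext ⟨a, j⟩
      simp only [Finset.mem_image, Finset.mem_product, Finset.mem_Icc, Prod.mk.injEq]
      constructor
      · rintro ⟨⟨x, i⟩, ⟨hx, hi1, hi2⟩, rfl, rfl⟩
        exact ⟨hx, by omega, by omega⟩
      · rintro ⟨hx, h1, h2⟩
        exact ⟨(a, (p : ℤ) + 1 - j), ⟨hx, by omega, by omega⟩, rfl, by omega⟩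
    · unfold prodArcs
      rw [Finset.biUnion_image]
      refine Finset.biUnion_congr rfl fun ab _ => ?_
      rw [Finset.image_image, Finset.image_image]
      rfl
    · intro x _
      simp only [inducedVert]
      ring
    · intro a _
      simp only [inducedArc, inducedVert]
      ring
end

section
/- Let D ∈ S_n^k and let h : E(D) → T^q_σ be any function. Then the digraph D ⊗_h T^q_σ is edge-magic. Explicitly, assigning to each vertex (i,a) the label (p+q)(i−1) + a and to each arc ((i,a),(j,b)) the label (p+q)(k + n − (i+j) − 1) + (σ − (a+b)) gives a bijection onto {1, …, n(p+q)} with constant edge sum (p+q)(k+n−3) + σ. -/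
open Finset

/-- Membership in the family `T^q_σ` (relative to a fixed vertex set `V ⊆ [1, p+q]` with
`|V| = p`): a digraph `F` on vertex set `V` with exactly `q` arcs admitting a bijection
`ℓ : E(F) → [1, p+q] ∖ V` with `i + ℓ((i,j)) + j = σ` for every arc `(i,j)`; necessarily
`ℓ((i,j)) = σ - (i + j)`, so this says the arc labels `σ - (i+j)` are exactly
`[1, p+q] ∖ V` (i.e. `F`, with vertices named by their labels, is edge-magic with magic
sum `σ`). -/
def memT (V : Finset ℤ) (q : ℕ) (σ : ℤ) (F : Finset (ℤ × ℤ)) : Prop :=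
  (∀ a ∈ F, a.1 ∈ V ∧ a.2 ∈ V) ∧
  F.card = q ∧
  F.image (fun a => σ - (a.1 + a.2)) =
    Finset.Icc (1 : ℤ) ((V.card : ℤ) + (q : ℤ)) \ V

/-- Let `D ∈ S_n^k` and let `h : E(D) → T^q_σ` be any function. Then `D ⊗_h T^q_σ` is
edge-magic: assigning to each vertex `(i,a)` the label `(p+q)(i-1) + a` and to each arc
`((i,a),(j,b))` the label `(p+q)(k+n-(i+j)-1) + (σ-(a+b))` gives a bijection onto
`[1, n(p+q)]` with constant edge sum `(p+q)(k+n-3) + σ`. -/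
theorem stmt12 (p q n : ℕ) (k σ : ℤ) (V : Finset ℤ)
    (hV : V ⊆ Finset.Icc (1 : ℤ) ((p : ℤ) + (q : ℤ))) (hVcard : V.card = p)
    (D : Finset (ℤ × ℤ)) (hD : memSpk n k D)
    (h : ℤ × ℤ → Finset (ℤ × ℤ)) (hh : ∀ a ∈ D, memT V q σ (h a)) :
    ((Finset.Icc (1 : ℤ) (n : ℤ) ×ˢ V).image
          (fun x : ℤ × ℤ => ((p : ℤ) + (q : ℤ)) * (x.1 - 1) + x.2) ∪
        (prodArcs D h).image
          (fun x => ((p : ℤ) + (q : ℤ)) * (k + (n : ℤ) - (x.1.1 + x.2.1) - 1) +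
            (σ - (x.1.2 + x.2.2)))
      = Finset.Icc (1 : ℤ) ((n : ℤ) * ((p : ℤ) + (q : ℤ)))) ∧
    ∀ x ∈ prodArcs D h,
      (((p : ℤ) + (q : ℤ)) * (x.1.1 - 1) + x.1.2) +
        (((p : ℤ) + (q : ℤ)) * (k + (n : ℤ) - (x.1.1 + x.2.1) - 1) +
          (σ - (x.1.2 + x.2.2))) +
        (((p : ℤ) + (q : ℤ)) * (x.2.1 - 1) + x.2.2)
      = ((p : ℤ) + (q : ℤ)) * (k + (n : ℤ) - 3) + σ := by
  obtain ⟨hD1, hD2, hD3⟩ := hD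
  refine ⟨?_, by intro x hx; ring⟩
  set m : ℤ := (p : ℤ) + q with hm
  have hm0 : 0 ≤ m := by positivity
  ext y
  simp only [Finset.mem_union, Finset.mem_image, Finset.mem_product, Finset.mem_Icc,
    Prod.exists]
  constructor
  · rintro (⟨i, a, ⟨⟨hi1, hi2⟩, haV⟩, rfl⟩ | ⟨i, a, j, b, hx, rfl⟩)
    · have ha := hV haV
      rw [Finset.mem_Icc] at ha
      constructor
      · nlinarith
      · nlinarith
    · simp only [prodArcs, Finset.mem_biUnion, Finset.mem_image, Prod.exists] at hx
      obtain ⟨i', j', hij, a', b', hab, heq⟩ := hx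
      simp only [Prod.mk.injEq] at heq
      obtain ⟨⟨rfl, rfl⟩, rfl, rfl⟩ := heq
      have hsum : i' + j' ∈ Finset.Icc k (k + (n : ℤ) - 1) := by
        rw [← hD3]; exact Finset.mem_image.2 ⟨(i', j'), hij, rfl⟩
      rw [Finset.mem_Icc] at hsum
      obtain ⟨hT1, hT2, hT3⟩ := hh (i', j') hij
      have hs : σ - (a' + b') ∈
          Finset.Icc (1 : ℤ) ((V.card : ℤ) + q) \ V :=
        hT3 ▸ Finset.mem_image.2 ⟨(a', b'), hab, rfl⟩
      rw [Finset.mem_sdiff, Finset.mem_Icc, hVcard] at hs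
      obtain ⟨⟨hs1, hs2⟩, -⟩ := hs
      constructor
      · nlinarith
      · nlinarith
  · rintro ⟨hy1, hy2⟩
    rcases eq_or_lt_of_le hm0 with hme | hmp
    · exfalso; rw [← hme] at hy2; simp at hy2; omega
    set t : ℤ := (y - 1) / m with ht
    set r : ℤ := (y - 1) % m with hr
    have hdm : m * t + r = y - 1 := Int.mul_ediv_add_emod (y - 1) m
    have hr0 : 0 ≤ r := Int.emod_nonneg _ (by omega)
    have hrm : r < m := Int.emod_lt_of_pos _ hmp
    have ht0 : 0 ≤ t := Int.ediv_nonneg (by omega) hm0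
    have htn : t ≤ (n : ℤ) - 1 := by
      by_contra hc
      push_neg at hc
      have : (n : ℤ) * m ≤ m * t := by nlinarith
      omega
    set s : ℤ := r + 1 with hs
    by_cases hsV : s ∈ V
    · exact Or.inl ⟨t + 1, s, ⟨⟨by omega, by omega⟩, hsV⟩, by linarith⟩
    · right
      have hsum : k + (n : ℤ) - 1 - t ∈ Finset.Icc k (k + (n : ℤ) - 1) := by
        rw [Finset.mem_Icc]; omega
      rw [← hD3] at hsum
      obtain ⟨⟨i, j⟩, hij, hijsum⟩ := Finset.mem_image.1 hsum
      obtain ⟨hT1, hT2, hT3⟩ := hh (i, j) hij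
      have hsmem : s ∈ Finset.Icc (1 : ℤ) ((V.card : ℤ) + q) \ V := by
        rw [Finset.mem_sdiff, Finset.mem_Icc, hVcard]
        exact ⟨⟨by omega, by omega⟩, hsV⟩
      rw [← hT3] at hsmem
      obtain ⟨⟨a, b⟩, hab, habs⟩ := Finset.mem_image.1 hsmem
      refine ⟨i, a, j, b, ?_, ?_⟩
      · simp only [prodArcs, Finset.mem_biUnion, Finset.mem_image, Prod.exists]
        exact ⟨i, j, hij, a, b, hab, rfl⟩
      · simp only at hijsum habs ⊢
        have : k + (n : ℤ) - (i + j) - 1 = t := by omega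
        rw [this, habs]
        linarith
end

section
/- Let D ∈ S_n^k, let h : E(D) → T^q_σ be any function, and let h̃ be the edge-magic labeling of D ⊗_h T^q_σ induced by the super edge-magic labeling of D and h (vertex (i,a) gets label (p+q)(i−1)+a; arc ((i,a),(j,b)) gets label (p+q)(k+n−(i+j)−1)+(σ−(a+b))). Then val(h̃) = (p+q)(k+n−3) + σ, where p = |V(F)| for every F ∈ T^q_σ. -/
open Finset

lemma biUnion_union_same {α β : Type*} [DecidableEq α] [DecidableEq β]
    (s : Finset α) (f g : α → Finset β) :
    s.biUnion f ∪ s.biUnion g = s.biUnion (fun a => f a ∪ g a) := by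
  ext x
  simp only [mem_union, mem_biUnion]
  constructor
  · rintro (⟨a, ha, hx⟩ | ⟨a, ha, hx⟩)
    · exact ⟨a, ha, Or.inl hx⟩
    · exact ⟨a, ha, Or.inr hx⟩
  · rintro ⟨a, ha, hx | hx⟩
    · exact Or.inl ⟨a, ha, hx⟩
    · exact Or.inr ⟨a, ha, hx⟩

lemma slice_lemma (N : ℤ) (hN : 0 < N) (n : ℕ) :
    (Finset.Icc (0:ℤ) ((n:ℤ)-1)).biUnion
      (fun m => (Finset.Icc (1:ℤ) N).image (fun c => N*m + c)) =
    Finset.Icc 1 ((n:ℤ)*N) := by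
  ext x
  simp only [mem_biUnion, mem_image, mem_Icc]
  constructor
  · rintro ⟨m, ⟨hm0, hm1⟩, c, ⟨hc1, hcN⟩, rfl⟩
    constructor
    · nlinarith
    · nlinarith
  · rintro ⟨hx1, hx2⟩
    refine ⟨(x-1)/N, ⟨Int.ediv_nonneg (by omega) hN.le, ?_⟩,
      x - N*((x-1)/N), ⟨?_, ?_⟩, by ring⟩
    · have : (x-1)/N < n := by
        rw [Int.ediv_lt_iff_lt_mul hN]; nlinarith
      omega
    · have h1 := Int.emod_nonneg (x-1) hN.ne'
      have h2 := Int.mul_ediv_add_emod (x-1) N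
      linarith
    · have h1 := Int.emod_lt_of_pos (x-1) hN
      have h2 := Int.mul_ediv_add_emod (x-1) N
      linarith

/-- Let `D ∈ S_n^k`, let `h : E(D) → T^q_σ` be any function, and let `h̃` be the labeling
of `D ⊗_h T^q_σ` induced by the super edge-magic labeling of `D` and `h` (vertex `(i,a)`
gets label `(p+q)(i-1)+a`; arc `((i,a),(j,b))` gets label
`(p+q)(k+n-(i+j)-1)+(σ-(a+b))`). Then `h̃` is an edge-magic labeling with valence
`val(h̃) = (p+q)(k+n-3) + σ`, where `p = |V(F)|` for every `F ∈ T^q_σ`. -/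
theorem stmt13 (p q n : ℕ) (k σ : ℤ) (V : Finset ℤ)
    (hV : V ⊆ Finset.Icc (1 : ℤ) ((p : ℤ) + (q : ℤ))) (hVcard : V.card = p)
    (D : Finset (ℤ × ℤ)) (hD : memSpk n k D)
    (h : ℤ × ℤ → Finset (ℤ × ℤ)) (hh : ∀ a ∈ D, memT V q σ (h a)) :
    DIsEdgeMagic (Finset.Icc (1 : ℤ) (n : ℤ) ×ˢ V) (prodArcs D h)
      (fun x : ℤ × ℤ => ((p : ℤ) + (q : ℤ)) * (x.1 - 1) + x.2)
      (fun x => ((p : ℤ) + (q : ℤ)) * (k + (n : ℤ) - (x.1.1 + x.2.1) - 1) +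
        (σ - (x.1.2 + x.2.2)))
      (((p : ℤ) + (q : ℤ)) * (k + (n : ℤ) - 3) + σ) := by
  obtain ⟨hDV, hDcard, hDsum⟩ := hD
  set N : ℤ := (p : ℤ) + (q : ℤ) with hNdef
  -- the T^q_σ arc-label set, rewritten with |V| = p
  have hhT : ∀ a ∈ D, (h a).image (fun ij => σ - (ij.1 + ij.2)) =
      Finset.Icc (1 : ℤ) N \ V := by
    intro a ha
    have := (hh a ha).2.2
    rwa [hVcard] at this
  constructor
  swap
  · intro a _
    ring
  -- cardinalities
  have hVscard : (Finset.Icc (1 : ℤ) (n : ℤ) ×ˢ V).card = n * p := by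
    rw [Finset.card_product, hVcard, Int.card_Icc]
    simp
  have hinj : ∀ ab : ℤ × ℤ, Function.Injective
      (fun ij : ℤ × ℤ => ((ab.1, ij.1), (ab.2, ij.2))) := by
    intro ab x y hxy
    simp only [Prod.mk.injEq] at hxy
    exact Prod.ext hxy.1.2 hxy.2.2
  have hAcard : (prodArcs D h).card = n * q := by
    rw [prodArcs, Finset.card_biUnion]
    · rw [Finset.sum_congr rfl (fun ab hab => ?_)]
      · rw [Finset.sum_const, hDcard, smul_eq_mul]
      · rw [Finset.card_image_of_injective _ (hinj ab), (hh ab hab).2.1]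
    · intro ab _ cd _ hne
      simp only [Finset.disjoint_left, mem_image]
      rintro x ⟨ij, _, rfl⟩ ⟨kl, _, hx⟩
      apply hne
      simp only [Prod.mk.injEq] at hx
      exact Prod.ext hx.1.1.symm hx.2.1.symm
  -- vertex-label image
  have hVim : (Finset.Icc (1 : ℤ) (n : ℤ) ×ˢ V).image
      (fun x : ℤ × ℤ => N * (x.1 - 1) + x.2) =
      (Finset.Icc (0:ℤ) ((n:ℤ)-1)).biUnion
        (fun m => V.image (fun c => N*m + c)) := by
    ext x
    simp only [mem_image, mem_product, mem_biUnion, mem_Icc]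
    constructor
    · rintro ⟨⟨i, a⟩, ⟨⟨hi1, hi2⟩, ha⟩, rfl⟩
      exact ⟨i - 1, ⟨by omega, by omega⟩, a, ha, by ring⟩
    · rintro ⟨m, ⟨hm0, hm1⟩, c, hc, rfl⟩
      exact ⟨(m + 1, c), ⟨⟨by omega, by omega⟩, hc⟩, by ring⟩
  -- arc-label image
  have hAim : (prodArcs D h).image
      (fun x : (ℤ × ℤ) × (ℤ × ℤ) =>
        N * (k + (n : ℤ) - (x.1.1 + x.2.1) - 1) + (σ - (x.1.2 + x.2.2))) =
      (Finset.Icc (0:ℤ) ((n:ℤ)-1)).biUnion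
        (fun m => (Finset.Icc (1:ℤ) N \ V).image (fun c => N*m + c)) := by
    ext x
    simp only [prodArcs, mem_image, mem_biUnion, Finset.mem_biUnion, mem_Icc]
    constructor
    · rintro ⟨y, hy, rfl⟩
      obtain ⟨ab, hab, ij, hij, rfl⟩ := hy
      have hs : ab.1 + ab.2 ∈ Finset.Icc k (k + (n : ℤ) - 1) := by
        rw [← hDsum]
        exact mem_image_of_mem _ hab
      rw [mem_Icc] at hs
      have hc : σ - (ij.1 + ij.2) ∈ Finset.Icc (1 : ℤ) N \ V := by
        rw [← hhT ab hab]
        exact mem_image_of_mem _ hij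
      exact ⟨k + n - 1 - (ab.1 + ab.2), ⟨by omega, by omega⟩,
        σ - (ij.1 + ij.2), hc, by ring⟩
    · rintro ⟨m, ⟨hm0, hm1⟩, c, hc, rfl⟩
      have hs : k + (n : ℤ) - 1 - m ∈ D.image (fun a => a.1 + a.2) := by
        rw [hDsum, mem_Icc]; omega
      simp only [mem_image] at hs
      obtain ⟨ab, hab, habs⟩ := hs
      have hc' : c ∈ (h ab).image (fun ij => σ - (ij.1 + ij.2)) := by
        rw [hhT ab hab]; exact hc
      simp only [mem_image] at hc'
      obtain ⟨ij, hij, hijc⟩ := hc'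
      refine ⟨((ab.1, ij.1), (ab.2, ij.2)), ?_, ?_⟩
      · exact ⟨ab, hab, ij, hij, rfl⟩
      · rw [show (ab.1, ij.1).1 + (ab.2, ij.2).1 = ab.1 + ab.2 from rfl]
        rw [habs, hijc]
        ring
  rcases Nat.eq_zero_or_pos (p + q) with hpq | hpq
  · -- degenerate case: p + q = 0 so everything is empty
    have hp : p = 0 := by omega
    have hq : q = 0 := by omega
    have hVempty : V = ∅ := by
      rw [← Finset.card_eq_zero, hVcard, hp]
    have hN0 : N = 0 := by rw [hNdef, hp, hq]; simp
    have h1 : (Finset.Icc (1 : ℤ) (n : ℤ) ×ˢ V) = ∅ := by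
      rw [hVempty, Finset.product_empty]
    have h2 : prodArcs D h = ∅ := by
      rw [← Finset.card_eq_zero, hAcard, hq, Nat.mul_zero]
    rw [h1, h2]
    simp
  -- main case
  have hN : 0 < N := by rw [hNdef]; exact_mod_cast hpq
  rw [hVim, hAim, biUnion_union_same]
  have hsplit : ∀ m : ℤ, V.image (fun c => N*m + c) ∪
      (Finset.Icc (1:ℤ) N \ V).image (fun c => N*m + c) =
      (Finset.Icc (1:ℤ) N).image (fun c => N*m + c) := by
    intro m
    rw [← Finset.image_union, Finset.union_sdiff_of_subset hV]
  rw [Finset.biUnion_congr rfl (fun m _ => hsplit m), slice_lemma N hN n]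
  congr 1
  rw [hVscard, hAcard]
  push_cast
  ring
end

section
/- Let D ∈ S_n^k and let h : E(D) → T^q_σ be any function. Then there exists a function h^c : E(D^c) → T^q_{3(p+q+1)−σ} such that D ⊗_h T^q_σ ≅ D^c ⊗_{h^c} T^q_{3(p+q+1)−σ}, and the complementary labeling of the induced edge-magic labeling h̃ of D ⊗_h T^q_σ is isomorphic (as a labeled digraph) to the induced edge-magic labeling of D^c ⊗_{h^c} T^q_{3(p+q+1)−σ}. -/
open Finset

lemma icc_img (a b c : ℤ) :
    (Finset.Icc a b).image (fun x => c - x) = Finset.Icc (c - b) (c - a) := by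
  ext x; simp only [mem_image, mem_Icc]
  constructor
  · rintro ⟨y, hy, rfl⟩; omega
  · intro hx; exact ⟨c - x, by omega, by omega⟩

lemma cm_inj (c : ℤ) : Function.Injective (fun ij : ℤ × ℤ => (c - ij.1, c - ij.2)) := by
  intro x y hxy
  simp only [Prod.mk.injEq, Prod.ext_iff] at *
  omega

lemma cm1_inj (c : ℤ) : Function.Injective (fun x : ℤ => c - x) := by
  intro x y hxy; dsimp only at hxy; omega

/-- Let `D ∈ S_n^k` and let `h : E(D) → T^q_σ` be any function. Then there is a function
`h^c : E(D^c) → T^q_{3(p+q+1)-σ}` (where `D^c ∈ S_n^{n+3-k}` has arcs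
`(n+1-i, n+1-j)` for `(i,j) ∈ E(D)`, and the second family lives on the vertex set
`{p+q+1-v : v ∈ V}`) such that `D ⊗_h T^q_σ ≅ D^c ⊗_{h^c} T^q_{3(p+q+1)-σ}`, and the
complementary labeling of the induced edge-magic labeling `h̃` of `D ⊗_h T^q_σ` is
isomorphic, as a labeled digraph, to the induced edge-magic labeling of
`D^c ⊗_{h^c} T^q_{3(p+q+1)-σ}`. -/
theorem stmt14 (p q n : ℕ) (k σ : ℤ) (V : Finset ℤ)
    (hV : V ⊆ Finset.Icc (1 : ℤ) ((p : ℤ) + (q : ℤ))) (hVcard : V.card = p)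
    (D : Finset (ℤ × ℤ)) (hD : memSpk n k D)
    (h : ℤ × ℤ → Finset (ℤ × ℤ)) (hh : ∀ a ∈ D, memT V q σ (h a)) :
    ∃ hc : ℤ × ℤ → Finset (ℤ × ℤ),
      (∀ a ∈ D.image (fun x => ((n : ℤ) + 1 - x.1, (n : ℤ) + 1 - x.2)),
        memT (V.image fun v => (p : ℤ) + (q : ℤ) + 1 - v) q
          (3 * ((p : ℤ) + (q : ℤ) + 1) - σ) (hc a)) ∧
      DigraphIso
        (Finset.Icc (1 : ℤ) (n : ℤ) ×ˢ V) (prodArcs D h)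
        (Finset.Icc (1 : ℤ) (n : ℤ) ×ˢ (V.image fun v => (p : ℤ) + (q : ℤ) + 1 - v))
        (prodArcs (D.image fun x => ((n : ℤ) + 1 - x.1, (n : ℤ) + 1 - x.2)) hc) ∧
      LabeledDigraphIso
        (Finset.Icc (1 : ℤ) (n : ℤ) ×ˢ V) (prodArcs D h)
        -- complementary labeling of the induced labeling `h̃`
        (fun x : ℤ × ℤ => (n : ℤ) * ((p : ℤ) + (q : ℤ)) + 1 -
          (((p : ℤ) + (q : ℤ)) * (x.1 - 1) + x.2))
        (fun x => (n : ℤ) * ((p : ℤ) + (q : ℤ)) + 1 -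
          (((p : ℤ) + (q : ℤ)) * (k + (n : ℤ) - (x.1.1 + x.2.1) - 1) +
            (σ - (x.1.2 + x.2.2))))
        (Finset.Icc (1 : ℤ) (n : ℤ) ×ˢ (V.image fun v => (p : ℤ) + (q : ℤ) + 1 - v))
        (prodArcs (D.image fun x => ((n : ℤ) + 1 - x.1, (n : ℤ) + 1 - x.2)) hc)
        -- induced labeling of `D^c ⊗_{h^c} T^q_{3(p+q+1)-σ}`
        (fun x : ℤ × ℤ => ((p : ℤ) + (q : ℤ)) * (x.1 - 1) + x.2)
        (fun x => ((p : ℤ) + (q : ℤ)) *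
            (((n : ℤ) + 3 - k) + (n : ℤ) - (x.1.1 + x.2.1) - 1) +
          ((3 * ((p : ℤ) + (q : ℤ) + 1) - σ) - (x.1.2 + x.2.2))) := by
  classical
  set pq : ℤ := (p : ℤ) + (q : ℤ) with hpq
  set cD : ℤ × ℤ → ℤ × ℤ := fun x => ((n : ℤ) + 1 - x.1, (n : ℤ) + 1 - x.2) with hcD
  set cm : ℤ × ℤ → ℤ × ℤ := fun ij => (pq + 1 - ij.1, pq + 1 - ij.2) with hcm
  set hcf : ℤ × ℤ → Finset (ℤ × ℤ) :=
    fun a => (h ((n : ℤ) + 1 - a.1, (n : ℤ) + 1 - a.2)).image cm with hhcf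
  set φ : ℤ × ℤ → ℤ × ℤ := fun x => ((n : ℤ) + 1 - x.1, pq + 1 - x.2) with hφ
  have hcDc : ∀ ab : ℤ × ℤ, cD (cD ab) = ab := by
    intro ab; simp only [hcD, Prod.ext_iff]; constructor <;> ring
  have hVimg : (V.image fun v => (p : ℤ) + (q : ℤ) + 1 - v) = V.image (fun v => pq + 1 - v) := rfl
  have hVcard' : (V.image fun v => (p : ℤ) + (q : ℤ) + 1 - v).card = p := by
    rw [Finset.card_image_of_injective _ (cm1_inj (pq + 1)), hVcard]
  -- vertex image fact
  have hVert : (Finset.Icc (1 : ℤ) (n : ℤ) ×ˢ V).image φ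
      = Finset.Icc (1 : ℤ) (n : ℤ) ×ˢ (V.image fun v => (p : ℤ) + (q : ℤ) + 1 - v) := by
    ext ⟨x, y⟩
    simp only [mem_image, mem_product, mem_Icc, Prod.exists, hφ, Prod.ext_iff]
    constructor
    · rintro ⟨a, b, ⟨⟨ha1, ha2⟩, hb⟩, rfl, rfl⟩
      exact ⟨⟨by omega, by omega⟩, b, hb, rfl⟩
    · rintro ⟨⟨hx1, hx2⟩, b, hb, rfl⟩
      exact ⟨(n : ℤ) + 1 - x, b, ⟨⟨by omega, by omega⟩, hb⟩, by ring, rfl⟩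
  have hInj : Set.InjOn φ ↑(Finset.Icc (1 : ℤ) (n : ℤ) ×ˢ V) := by
    intro x _ y _ hxy
    simp only [hφ, Prod.ext_iff] at hxy ⊢
    omega
  -- arc image fact
  have hArc : (prodArcs D h).image (Prod.map φ φ)
      = prodArcs (D.image cD) hcf := by
    unfold prodArcs
    rw [Finset.biUnion_image, Finset.image_biUnion]
    apply Finset.biUnion_congr rfl
    intro ab hab
    have habc : ((n : ℤ) + 1 - (cD ab).1, (n : ℤ) + 1 - (cD ab).2) = ab := by
      simp only [hcD, Prod.ext_iff]; constructor <;> ring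
    simp only [hhcf, habc]
    rw [Finset.image_image, Finset.image_image]
    apply Finset.image_congr
    intro ij _
    simp only [Function.comp, Prod.map, hφ, hcD, hcm]
  refine ⟨hcf, ?_, ⟨φ, hInj, hVert, hArc⟩, ⟨φ, hInj, hVert, hArc, ?_, ?_⟩⟩
  · -- memT for hcf
    intro a ha
    rw [Finset.mem_image] at ha
    obtain ⟨b, hb, rfl⟩ := ha
    have habc : ((n : ℤ) + 1 - (cD b).1, (n : ℤ) + 1 - (cD b).2) = b := by
      simp only [hcD, Prod.ext_iff]; constructor <;> ring
    obtain ⟨hT1, hT2, hT3⟩ := hh b hb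
    refine ⟨?_, ?_, ?_⟩
    · intro x hx
      simp only [hhcf, habc, Finset.mem_image] at hx
      obtain ⟨y, hy, rfl⟩ := hx
      exact ⟨Finset.mem_image_of_mem _ (hT1 y hy).1, Finset.mem_image_of_mem _ (hT1 y hy).2⟩
    · simp only [hhcf, habc]
      rw [Finset.card_image_of_injective _ (cm_inj (pq + 1)), hT2]
    · simp only [hhcf, habc]
      rw [Finset.image_image]
      have key : (h b).image ((fun a : ℤ × ℤ => 3 * ((p : ℤ) + (q : ℤ) + 1) - σ - (a.1 + a.2)) ∘ cm)
          = ((h b).image (fun a => σ - (a.1 + a.2))).image (fun t => pq + 1 - t) := by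
        rw [Finset.image_image]
        apply Finset.image_congr
        intro x _
        simp only [Function.comp, hcm, hpq]
        ring
      rw [key, hT3, Finset.image_sdiff _ _ (cm1_inj (pq + 1)), icc_img, hVcard, hVcard']
      have e1 : pq + 1 - ((p : ℤ) + (q : ℤ)) = 1 := by rw [hpq]; ring
      have e2 : pq + 1 - 1 = (p : ℤ) + (q : ℤ) := by rw [hpq]; ring
      rw [e1, e2, hVimg]
  · -- vertex labels
    intro x hx
    simp only [hφ, hpq]
    ring
  · -- arc labels
    intro a ha
    simp only [hφ, hpq]
    ring
end

section
/- Let m, n ∈ ℕ, let g be a generator of a cyclic subgroup ⟨g⟩ of ℤ_n of order κ, and let N < m be a natural number satisfying m − 2N ≡ g (mod n). If h : E(C⃗_m) → {C⃗_n, C⃖_n} assigns C⃖_n to exactly N arcs of C⃗_m, then C⃗_m ⊗_h {C⃗_n, C⃖_n} consists of exactly n/κ disjoint copies of the strongly oriented cycle C⃗_{mκ}. In particular, if gcd(g,n) = 1 then C⃗_m ⊗_h {C⃗_n, C⃖_n} ≅ C⃗_{mn}. -/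
open Finset

/-- The arc set of the strongly oriented cycle `C⃗_n` on the vertex set `[1,n] ⊆ ℤ`:
arcs `i → i+1` (and `n → 1`). -/
noncomputable def forwardCycle (n : ℕ) : Finset (ℤ × ℤ) :=
  (Finset.Icc (1 : ℤ) (n : ℤ)).image fun i => (i, if i = (n : ℤ) then 1 else i + 1)

/-- The arc set of the reverse strong orientation `C⃖_n` of the cycle `C_n` on the
vertex set `[1,n] ⊆ ℤ`. -/
noncomputable def backwardCycle (n : ℕ) : Finset (ℤ × ℤ) :=
  (Finset.Icc (1 : ℤ) (n : ℤ)).image fun i => (if i = (n : ℤ) then 1 else i + 1, i)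

/-- The arc set of the disjoint union of `c` copies of the strongly oriented cycle
`C⃗_L`, on the vertex set `[1,c] × [1,L] ⊆ ℤ × ℤ`. -/
noncomputable def unionCycles (c L : ℕ) : Finset ((ℤ × ℤ) × (ℤ × ℤ)) :=
  ((Finset.Icc (1 : ℤ) (c : ℤ)) ×ˢ (Finset.Icc (1 : ℤ) (L : ℤ))).image
    fun x => (x, (x.1, if x.2 = (L : ℤ) then 1 else x.2 + 1))

/-!
Every vertex `(a, i)` of `C⃗_m ⊗_h {C⃗_n, C⃖_n}` has exactly one out-arc, to `(a + 1, i ± 1)`.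
Subtracting from `i` the signed number of steps taken since column `1` yields a label in `ℤ_n`
that is constant along every arc except those leaving column `m`, where it grows by
`m - 2N = g`. So the cosets of `⟨g⟩` index the components, and within a component a vertex is
determined by its column `a` and by the number `k < κ` of multiples of `g` separating its label
from a fixed coset representative; the position `a + m k` lays the component out as `C⃗_{mκ}`.
-/

namespace DigraphIso

variable {β γ δ : Type*} [DecidableEq β] [DecidableEq γ] [DecidableEq δ]

theorem trans {V1 : Finset β} {A1 : Finset (β × β)} {V2 : Finset γ} {A2 : Finset (γ × γ)}
    {V3 : Finset δ} {A3 : Finset (δ × δ)}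
    (h12 : DigraphIso V1 A1 V2 A2) (h23 : DigraphIso V2 A2 V3 A3) : DigraphIso V1 A1 V3 A3 := by
  obtain ⟨φ, hφ, hφV, hφA⟩ := h12
  obtain ⟨ψ, hψ, hψV, hψA⟩ := h23
  refine ⟨ψ ∘ φ, hψ.comp hφ ?_, ?_, ?_⟩
  · rw [← hφV, Finset.coe_image]; exact Set.mapsTo_image φ _
  · rw [← Finset.image_image, hφV, hψV]
  · rw [← Prod.map_comp_map, ← Finset.image_image, hφA, hψA]

theorem of_succ {V1 : Finset β} {V2 : Finset γ} {s : β → β} {t : γ → γ} {φ : β → γ}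
    (hinj : Set.InjOn φ V1) (hmaps : Set.MapsTo φ V1 V2) (hcard : V2.card ≤ V1.card)
    (hcomm : ∀ u ∈ V1, φ (s u) = t (φ u)) :
    DigraphIso V1 (V1.image fun u => (u, s u)) V2 (V2.image fun w => (w, t w)) := by
  have himage : V1.image φ = V2 :=
    Finset.eq_of_subset_of_card_le (Finset.image_subset_iff.mpr hmaps)
      (by rwa [Finset.card_image_of_injOn hinj])
  refine ⟨φ, hinj, himage, ?_⟩
  rw [← himage, Finset.image_image, Finset.image_image]
  exact Finset.image_congr fun u hu => by simp [hcomm u hu]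

end DigraphIso

section CosetLog

variable {G : Type*} [AddGroup G] {g : G} (hg : IsOfFinAddOrder g)

theorem neg_out_mk_add_mem_zmultiples (x : G) :
    -(QuotientAddGroup.mk x : G ⧸ AddSubgroup.zmultiples g).out + x ∈
      AddSubgroup.zmultiples g :=
  QuotientAddGroup.eq.mp (QuotientAddGroup.out_eq' _)

/-- The position of `x` in its coset of `⟨g⟩`, counted in steps of `g` from the chosen
representative of the coset. -/
noncomputable def cosetLog (x : G) : ℕ :=
  (finEquivZMultiples hg).symm ⟨_, neg_out_mk_add_mem_zmultiples x⟩

theorem cosetLog_lt (x : G) : cosetLog hg x < addOrderOf g :=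
  ((finEquivZMultiples hg).symm _).isLt

theorem cosetLog_nsmul (x : G) :
    cosetLog hg x • g = -(QuotientAddGroup.mk x : G ⧸ AddSubgroup.zmultiples g).out + x :=
  nsmul_finEquivZMultiples_symm_apply hg _

theorem out_add_cosetLog_nsmul (x : G) :
    (QuotientAddGroup.mk x : G ⧸ AddSubgroup.zmultiples g).out + cosetLog hg x • g = x := by
  rw [cosetLog_nsmul, add_neg_cancel_left]

theorem mk_add_self_zmultiples (x : G) :
    (QuotientAddGroup.mk (x + g) : G ⧸ AddSubgroup.zmultiples g) = QuotientAddGroup.mk x :=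
  QuotientAddGroup.eq.mpr (by simp [neg_add_rev, AddSubgroup.mem_zmultiples])

theorem cosetLog_add_self (x : G) :
    cosetLog hg (x + g) = (cosetLog hg x + 1) % addOrderOf g := by
  have key : -(QuotientAddGroup.mk (x + g) : G ⧸ AddSubgroup.zmultiples g).out + (x + g) =
      (cosetLog hg x + 1) • g := by
    rw [mk_add_self_zmultiples, succ_nsmul, cosetLog_nsmul, add_assoc]
  unfold cosetLog
  simp_rw [key]
  exact congrArg Fin.val (finEquivZMultiples_symm_apply hg _)

theorem eq_of_mk_eq_of_cosetLog_eq {x y : G}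
    (hmk : (QuotientAddGroup.mk x : G ⧸ AddSubgroup.zmultiples g) = QuotientAddGroup.mk y)
    (hlog : cosetLog hg x = cosetLog hg y) : x = y := by
  rw [← out_add_cosetLog_nsmul hg x, ← out_add_cosetLog_nsmul hg y, hmk, hlog]

end CosetLog

def nxt (n : ℕ) (i : ℤ) : ℤ := if i = n then 1 else i + 1

def prv (n : ℕ) (i : ℤ) : ℤ := if i = 1 then n else i - 1

section CycleArith

variable {n : ℕ} {i : ℤ}

theorem intCast_nxt (n : ℕ) (i : ℤ) : ((nxt n i : ℤ) : ZMod n) = i + 1 := by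
  unfold nxt; split_ifs with h <;> simp [h]

theorem intCast_prv (n : ℕ) (i : ℤ) : ((prv n i : ℤ) : ZMod n) = i - 1 := by
  unfold prv; split_ifs with h <;> simp [h]

theorem intCast_injOn_Icc (n : ℕ) :
    Set.InjOn (fun i : ℤ => (i : ZMod n)) (Icc (1 : ℤ) n) := by
  intro i hi j hj hij
  have hdvd : (n : ℤ) ∣ i - j := (ZMod.intCast_eq_intCast_iff_dvd_sub j i n).mp hij.symm
  have habs : |i - j| < n := by
    simp only [coe_Icc, Set.mem_Icc] at hi hj; rw [abs_lt]; omega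
  exact sub_eq_zero.mp (Int.eq_zero_of_abs_lt_dvd hdvd habs)

theorem mem_forwardCycle {j : ℤ} :
    (i, j) ∈ forwardCycle n ↔ i ∈ Icc (1 : ℤ) n ∧ j = nxt n i := by
  simp only [forwardCycle, mem_image, Prod.mk.injEq, nxt]
  constructor
  · rintro ⟨i, hi, rfl, rfl⟩; exact ⟨hi, rfl⟩
  · rintro ⟨hi, rfl⟩; exact ⟨i, hi, rfl, rfl⟩

theorem mem_backwardCycle {j : ℤ} :
    (i, j) ∈ backwardCycle n ↔ i ∈ Icc (1 : ℤ) n ∧ j = prv n i := by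
  simp only [backwardCycle, mem_image, mem_Icc, Prod.mk.injEq, prv]
  constructor
  · rintro ⟨j, hj, rfl, rfl⟩; constructor <;> split_ifs <;> omega
  · rintro ⟨hi, rfl⟩; refine ⟨_, ?_, ?_, rfl⟩ <;> split_ifs <;> omega

end CycleArith

section BlockPosition

variable {m κ : ℕ} {a a' : ℤ}

theorem add_mul_mem_Icc (ha : a ∈ Icc (1 : ℤ) m) {k : ℕ} (hk : k < κ) :
    a + m * k ∈ Icc (1 : ℤ) (m * κ : ℕ) := by
  rw [mem_Icc] at *
  have : (m : ℤ) * (k + 1) ≤ m * κ := mul_le_mul_of_nonneg_left (by omega) (by positivity)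
  push_cast
  constructor <;> nlinarith

theorem eq_of_add_mul_eq (ha : a ∈ Icc (1 : ℤ) m) (ha' : a' ∈ Icc (1 : ℤ) m) {k k' : ℕ}
    (h : a + m * k = a' + m * k') : a = a' ∧ k = k' := by
  rw [mem_Icc] at ha ha'
  have hdvd : (m : ℤ) ∣ a - a' := ⟨k' - k, by linarith⟩
  have ha_eq : a = a' := sub_eq_zero.mp (Int.eq_zero_of_abs_lt_dvd hdvd (by rw [abs_lt]; omega))
  subst ha_eq
  exact ⟨rfl, by exact_mod_cast mul_left_cancel₀ (by omega : (m : ℤ) ≠ 0) (add_left_cancel h)⟩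

/-- `C⃗_{mκ}` read as `κ` consecutive blocks of length `m`: position `a + m k` is column `a`
of block `k`. -/
theorem nxt_add_mul (ha : a ∈ Icc (1 : ℤ) m) {k : ℕ} (hk : k < κ) :
    nxt (m * κ) (a + m * k) = nxt m a + m * ((if a = m then (k + 1) % κ else k : ℕ) : ℤ) := by
  rw [mem_Icc] at ha
  have hkκ : (m : ℤ) * (k + 1) ≤ m * κ := mul_le_mul_of_nonneg_left (by omega) (by positivity)
  unfold nxt
  by_cases ham : a = m
  · subst ham
    rcases (show k + 1 = κ ∨ k + 1 < κ by omega) with hlast | hlt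
    · rw [if_pos (by push_cast; rw [← hlast]; push_cast; ring), if_pos rfl, if_pos rfl, hlast,
        Nat.mod_self]
      simp
    · rw [if_neg, if_pos rfl, if_pos rfl, Nat.mod_eq_of_lt hlt]
      · push_cast; ring
      · push_cast; intro h
        have : (m : ℤ) * (k + 1) = m * κ := by linarith
        have := mul_left_cancel₀ (by omega : (m : ℤ) ≠ 0) this
        omega
  · rw [if_neg, if_neg ham, if_neg ham]
    · ring
    · push_cast; intro h; linarith [lt_of_le_of_ne ha.2 ham]

end BlockPosition

theorem mem_prodArcs {α : Type*} [DecidableEq α] {A : Finset (α × α)}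
    {h : α × α → Finset (ℤ × ℤ)} {u v : α × ℤ} :
    (u, v) ∈ prodArcs A h ↔ (u.1, v.1) ∈ A ∧ (u.2, v.2) ∈ h (u.1, v.1) := by
  obtain ⟨a, i⟩ := u
  obtain ⟨b, j⟩ := v
  simp only [prodArcs, mem_biUnion, mem_image, Prod.mk.injEq]
  constructor
  · rintro ⟨⟨a, b⟩, hab, ⟨i, j⟩, hij, ⟨rfl, rfl⟩, rfl, rfl⟩; exact ⟨hab, hij⟩
  · rintro ⟨hab, hij⟩; exact ⟨_, hab, _, hij, ⟨rfl, rfl⟩, rfl, rfl⟩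

noncomputable section Product

variable (m n : ℕ) (h : ℤ × ℤ → Finset (ℤ × ℤ))

/-- The successor map of `C⃗_m ⊗_h {C⃗_n, C⃖_n}`, in which every vertex has out-degree one. -/
def prodSucc (u : ℤ × ℤ) : ℤ × ℤ :=
  (nxt m u.1, if h (u.1, nxt m u.1) = backwardCycle n then prv n u.2 else nxt n u.2)

def arcSign (a : ℤ) : ZMod n := if h (a, nxt m a) = backwardCycle n then -1 else 1

def winding (a : ℤ) : ZMod n := ∑ b ∈ Ico 1 a, arcSign m n h b

def unwind (u : ℤ × ℤ) : ZMod n := u.2 - winding m n h u.1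

variable {m n h}

theorem mem_column_arc_iff
    (hrange : ∀ a ∈ forwardCycle m, h a = forwardCycle n ∨ h a = backwardCycle n)
    {a i j : ℤ} (ha : a ∈ Icc (1 : ℤ) m) :
    (i, j) ∈ h (a, nxt m a) ↔ i ∈ Icc (1 : ℤ) n ∧ j = (prodSucc m n h (a, i)).2 := by
  unfold prodSucc
  by_cases hb : h (a, nxt m a) = backwardCycle n
  · rw [if_pos hb, hb, mem_backwardCycle]
  · rw [if_neg hb, ((hrange _ (mem_forwardCycle.mpr ⟨ha, rfl⟩)).resolve_right hb),
      mem_forwardCycle]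

theorem prodArcs_eq_image_prodSucc
    (hrange : ∀ a ∈ forwardCycle m, h a = forwardCycle n ∨ h a = backwardCycle n) :
    prodArcs (forwardCycle m) h =
      (Icc (1 : ℤ) m ×ˢ Icc (1 : ℤ) n).image fun u => (u, prodSucc m n h u) := by
  ext ⟨⟨a, i⟩, b, j⟩
  rw [mem_prodArcs, mem_image]
  constructor
  · rintro ⟨hab, hij⟩
    obtain ⟨ha, rfl⟩ := mem_forwardCycle.mp hab
    obtain ⟨hi, rfl⟩ := (mem_column_arc_iff hrange ha).mp hij
    exact ⟨(a, i), mem_product.mpr ⟨ha, hi⟩, rfl⟩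
  · rintro ⟨⟨a, i⟩, hai, hsucc⟩
    obtain ⟨ha, hi⟩ := mem_product.mp hai
    rw [Prod.mk.injEq] at hsucc
    obtain ⟨⟨rfl, rfl⟩, hbj⟩ := hsucc
    rw [← hbj]
    exact ⟨mem_forwardCycle.mpr ⟨ha, rfl⟩, (mem_column_arc_iff hrange ha).mpr ⟨hi, rfl⟩⟩

theorem intCast_prodSucc_snd (u : ℤ × ℤ) :
    ((prodSucc m n h u).2 : ZMod n) = u.2 + arcSign m n h u.1 := by
  unfold prodSucc arcSign; split_ifs <;> simp [intCast_nxt, intCast_prv, sub_eq_add_neg]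

theorem unwind_prodSucc {u : ℤ × ℤ} (hu : u.1 ∈ Icc (1 : ℤ) m) :
    unwind m n h (prodSucc m n h u) =
      unwind m n h u + if u.1 = m then winding m n h (m + 1) else 0 := by
  rw [mem_Icc] at hu
  simp only [unwind, intCast_prodSucc_snd]
  have hstep : winding m n h (u.1 + 1) = winding m n h u.1 + arcSign m n h u.1 := by
    rw [winding, winding, ← insert_Ico_right_eq_Ico_add_one hu.1, sum_insert (by simp), add_comm]
  by_cases hum : u.1 = m
  · rw [if_pos hum, ← hum, hstep, show (prodSucc m n h u).1 = 1 from if_pos hum]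
    rw [show winding m n h 1 = 0 from sum_empty]
    ring
  · rw [if_neg hum, show (prodSucc m n h u).1 = u.1 + 1 from if_neg hum, hstep]
    ring

theorem winding_last {N : ℕ}
    (hcount : ((forwardCycle m).filter fun a => h a = backwardCycle n).card = N) :
    winding m n h (m + 1) = m - 2 * N := by
  have hcount' :
      ((Icc (1 : ℤ) m).filter fun a => h (a, nxt m a) = backwardCycle n).card = N := by
    rw [← hcount, forwardCycle, filter_image,
      card_image_of_injective _ fun a b hab => (Prod.mk.inj hab).1]
    rfl
  have hsign (b : ℤ) :
      arcSign m n h b = 1 - 2 * if h (b, nxt m b) = backwardCycle n then 1 else 0 := by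
    unfold arcSign; split_ifs <;> ring
  simp only [winding, Ico_add_one_right_eq_Icc, hsign, sum_sub_distrib, ← mul_sum, sum_boole,
    hcount', sum_const, Int.card_Icc, add_sub_cancel_right, Int.toNat_natCast, nsmul_one]

end Product

noncomputable section CycleCoords

variable {n c : ℕ} {g : ZMod n} (hg : IsOfFinAddOrder g)
  (ι : ZMod n ⧸ AddSubgroup.zmultiples g ≃ Fin c)

def cycleCoords (m : ℕ) (h : ℤ × ℤ → Finset (ℤ × ℤ)) (u : ℤ × ℤ) : ℤ × ℤ :=
  ((ι (unwind m n h u) : ℕ) + 1, u.1 + m * cosetLog hg (unwind m n h u))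

variable {m : ℕ} {h : ℤ × ℤ → Finset (ℤ × ℤ)}

theorem cycleCoords_mapsTo :
    Set.MapsTo (cycleCoords hg ι m h) ↑(Icc (1 : ℤ) m ×ˢ Icc (1 : ℤ) n)
      ↑(Icc (1 : ℤ) c ×ˢ Icc (1 : ℤ) (m * addOrderOf g : ℕ)) := by
  intro u hu
  simp only [coe_product, Set.mem_prod, mem_coe] at hu ⊢
  refine ⟨?_, add_mul_mem_Icc hu.1 (cosetLog_lt hg _)⟩
  have := (ι (unwind m n h u)).isLt
  simp only [cycleCoords, mem_Icc]; omega

theorem cycleCoords_injOn :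
    Set.InjOn (cycleCoords hg ι m h) ↑(Icc (1 : ℤ) m ×ˢ Icc (1 : ℤ) n) := by
  intro u hu v hv huv
  simp only [coe_product, Set.mem_prod, mem_coe] at hu hv
  simp only [cycleCoords, Prod.mk.injEq, add_left_inj, Nat.cast_inj, Fin.val_inj,
    EmbeddingLike.apply_eq_iff_eq] at huv
  obtain ⟨hcol, hlog⟩ := eq_of_add_mul_eq hu.1 hv.1 huv.2
  have hunwind := eq_of_mk_eq_of_cosetLog_eq hg huv.1 hlog
  rw [unwind, unwind, hcol, sub_left_inj] at hunwind
  exact Prod.ext hcol (intCast_injOn_Icc n hu.2 hv.2 hunwind)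

theorem cycleCoords_prodSucc (hwind : winding m n h (m + 1) = g) {u : ℤ × ℤ}
    (hu : u ∈ Icc (1 : ℤ) m ×ˢ Icc (1 : ℤ) n) :
    cycleCoords hg ι m h (prodSucc m n h u) =
      ((cycleCoords hg ι m h u).1, nxt (m * addOrderOf g) (cycleCoords hg ι m h u).2) := by
  rw [mem_product] at hu
  have hunwind := unwind_prodSucc (n := n) (h := h) hu.1
  rw [hwind] at hunwind
  simp only [cycleCoords, nxt_add_mul hu.1 (cosetLog_lt hg _)]
  by_cases hum : u.1 = m
  · simp only [hunwind, if_pos hum, mk_add_self_zmultiples, cosetLog_add_self]; rfl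
  · simp only [hunwind, if_neg hum, add_zero]; rfl

end CycleCoords

theorem ZMod.index_zmultiples_mul_addOrderOf {n : ℕ} [NeZero n] (g : ZMod n) :
    (AddSubgroup.zmultiples g).index * addOrderOf g = n := by
  rw [← Nat.card_zmultiples, AddSubgroup.index_mul_card, Nat.card_zmod]

theorem digraphIso_prodArcs_unionCycles {m n : ℕ} [NeZero n] {h : ℤ × ℤ → Finset (ℤ × ℤ)}
    {g : ZMod n}
    (hrange : ∀ a ∈ forwardCycle m, h a = forwardCycle n ∨ h a = backwardCycle n)
    (hwind : winding m n h (m + 1) = g) :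
    DigraphIso (Icc (1 : ℤ) m ×ˢ Icc (1 : ℤ) n) (prodArcs (forwardCycle m) h)
      (Icc (1 : ℤ) (AddSubgroup.zmultiples g).index ×ˢ Icc (1 : ℤ) (m * addOrderOf g : ℕ))
      (unionCycles (AddSubgroup.zmultiples g).index (m * addOrderOf g)) := by
  have hg : IsOfFinAddOrder g := isOfFinAddOrder_of_finite g
  let ι := Finite.equivFinOfCardEq (α := ZMod n ⧸ AddSubgroup.zmultiples g) rfl
  rw [prodArcs_eq_image_prodSucc hrange]
  refine DigraphIso.of_succ (cycleCoords_injOn hg ι) (cycleCoords_mapsTo hg ι) ?_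
    fun u hu => cycleCoords_prodSucc hg ι hwind hu
  simp only [card_product, Int.card_Icc, add_sub_cancel_right, Int.toNat_natCast,
    ← ZMod.index_zmultiples_mul_addOrderOf g]
  rw [mul_left_comm]

theorem digraphIso_unionCycles_one (L : ℕ) :
    DigraphIso (Icc (1 : ℤ) (1 : ℕ) ×ˢ Icc (1 : ℤ) L) (unionCycles 1 L)
      (Icc (1 : ℤ) L) (forwardCycle L) := by
  refine DigraphIso.of_succ (φ := Prod.snd) ?_ ?_ ?_ fun _ _ => rfl
  · intro u hu v hv huv
    simp only [coe_product, Set.mem_prod, coe_Icc, Set.mem_Icc, Nat.cast_one] at hu hv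
    exact Prod.ext (by omega) huv
  · intro u hu
    simp only [coe_product, Set.mem_prod, mem_coe] at hu
    exact hu.2
  · simp

theorem stmt15_general (m n : ℕ) (hn : 3 ≤ n)
    (g : ZMod n) (κ : ℕ) (hκ : addOrderOf g = κ)
    (N : ℕ) (hcong : (m : ZMod n) - 2 * (N : ZMod n) = g)
    (h : ℤ × ℤ → Finset (ℤ × ℤ))
    (hrange : ∀ a ∈ forwardCycle m, h a = forwardCycle n ∨ h a = backwardCycle n)
    (hcount : ((forwardCycle m).filter fun a => h a = backwardCycle n).card = N) :
    DigraphIso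
      (Finset.Icc (1 : ℤ) (m : ℤ) ×ˢ Finset.Icc (1 : ℤ) (n : ℤ))
      (prodArcs (forwardCycle m) h)
      (Finset.Icc (1 : ℤ) ((n / κ : ℕ) : ℤ) ×ˢ Finset.Icc (1 : ℤ) ((m * κ : ℕ) : ℤ))
      (unionCycles (n / κ) (m * κ)) ∧
    (Nat.gcd (ZMod.val g) n = 1 →
      DigraphIso
        (Finset.Icc (1 : ℤ) (m : ℤ) ×ˢ Finset.Icc (1 : ℤ) (n : ℤ))
        (prodArcs (forwardCycle m) h)
        (Finset.Icc (1 : ℤ) ((m * n : ℕ) : ℤ))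
        (forwardCycle (m * n))) := by
  have : NeZero n := ⟨by omega⟩
  subst hκ
  have hindex : n / addOrderOf g = (AddSubgroup.zmultiples g).index :=
    Nat.div_eq_of_eq_mul_left (addOrderOf_pos g) (ZMod.index_zmultiples_mul_addOrderOf g).symm
  have hcycles := digraphIso_prodArcs_unionCycles hrange ((winding_last hcount).trans hcong)
  rw [← hindex] at hcycles
  refine ⟨hcycles, fun hgcd => ?_⟩
  have horder : addOrderOf g = n := by
    rw [← ZMod.natCast_zmod_val g, ZMod.addOrderOf_coe _ (NeZero.ne n), Nat.gcd_comm, hgcd,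
      Nat.div_one]
  rw [horder, Nat.div_self (by omega)] at hcycles
  exact DigraphIso.trans hcycles (digraphIso_unionCycles_one (m * n))

/-- Let `g` be a generator of a cyclic subgroup of `ℤ_n` of order `κ`, and let `N < m`
satisfy `m - 2N ≡ g (mod n)`. If `h : E(C⃗_m) → {C⃗_n, C⃖_n}` assigns `C⃖_n` to exactly
`N` arcs of `C⃗_m`, then `C⃗_m ⊗_h {C⃗_n, C⃖_n}` consists of exactly `n/κ` disjoint
copies of the strongly oriented cycle `C⃗_{mκ}`. In particular, if `gcd(g,n) = 1`, then
`C⃗_m ⊗_h {C⃗_n, C⃖_n} ≅ C⃗_{mn}`. -/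
theorem stmt15 (m n : ℕ) (hm : 3 ≤ m) (hn : 3 ≤ n)
    (g : ZMod n) (κ : ℕ) (hκ : addOrderOf g = κ)
    (N : ℕ) (hN : N < m) (hcong : (m : ZMod n) - 2 * (N : ZMod n) = g)
    (h : ℤ × ℤ → Finset (ℤ × ℤ))
    (hrange : ∀ a ∈ forwardCycle m, h a = forwardCycle n ∨ h a = backwardCycle n)
    (hcount : ((forwardCycle m).filter fun a => h a = backwardCycle n).card = N) :
    DigraphIso
      (Finset.Icc (1 : ℤ) (m : ℤ) ×ˢ Finset.Icc (1 : ℤ) (n : ℤ))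
      (prodArcs (forwardCycle m) h)
      (Finset.Icc (1 : ℤ) ((n / κ : ℕ) : ℤ) ×ˢ Finset.Icc (1 : ℤ) ((m * κ : ℕ) : ℤ))
      (unionCycles (n / κ) (m * κ)) ∧
    (Nat.gcd (ZMod.val g) n = 1 →
      DigraphIso
        (Finset.Icc (1 : ℤ) (m : ℤ) ×ˢ Finset.Icc (1 : ℤ) (n : ℤ))
        (prodArcs (forwardCycle m) h)
        (Finset.Icc (1 : ℤ) ((m * n : ℕ) : ℤ))
        (forwardCycle (m * n))) :=
  stmt15_general m n hn g κ hκ N hcong h hrange hcount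
end
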